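/- arXiv:1602.03569 — 6 statements merged into one kernel-verified Lean document; each statement's English description precedes it below -/
import Mathlib

section
/- Let k ≥ 2 be an integer and let H = (V, E_k) be a k-uniform hypergraph with N vertices whose average degree t^{k−1} := k·|E_k|/N satisfies t ≥ 1. Then α(H) ≥ ((k−1)/k)·(N/t). -/
/-!
Spencer's alteration argument: keep each vertex independently with probability `p = 1/t`
and delete one vertex from every edge inside the chosen set. What remains is independent, and its
expected size is at least `p N - |E| p^k = N/t - N/(k t)`.
-/

/-- The independence number of a hypergraph with edge set `E` on vertex type `V`:
the maximum size of a set `I` of vertices containing no edge. -/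
noncomputable def indepNum {V : Type*} [DecidableEq V] (E : Finset (Finset V)) : ℕ :=
  sSup {m | ∃ I : Finset V, (∀ e ∈ E, ¬ e ⊆ I) ∧ I.card = m}

open Finset

variable {V : Type*} [Fintype V]

theorem filter_superset_eq_image_union [DecidableEq V] (A : Finset V) :
    ({S | A ⊆ S} : Finset (Finset V)) = Aᶜ.powerset.image (A ∪ ·) := by
  rw [compl_eq_univ_sdiff, ← Icc_eq_image_powerset (subset_univ A)]
  ext S; simp [subset_univ]

theorem sum_superset_pow_mul_pow [DecidableEq V] {R : Type*} [CommSemiring R] (p q : R)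
    (A : Finset V) :
    ∑ S with A ⊆ S, p ^ #S * q ^ (Fintype.card V - #S) =
      p ^ #A * (p + q) ^ (Fintype.card V - #A) := by
  have hdisj : ∀ T ∈ Aᶜ.powerset, Disjoint A T := fun T hT =>
    subset_compl_iff_disjoint_left.1 (mem_powerset.1 hT)
  rw [filter_superset_eq_image_union, sum_image, ← card_compl, ← sum_pow_mul_eq_add_pow,
    mul_sum]
  · refine sum_congr rfl fun T hT => ?_
    rw [card_union_of_disjoint (hdisj T hT), card_compl, pow_add, mul_assoc, Nat.sub_sub]
  · intro T hT T' hT' h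
    rw [← union_sdiff_cancel_left (hdisj T hT), ← union_sdiff_cancel_left (hdisj T' hT')]
    exact congrArg (· \ A) h

/-- The probability that a `p`-random subset of `V` (each vertex kept independently with
probability `p`) is exactly `S`. -/
def randomSubsetWeight (p : ℝ) (S : Finset V) : ℝ := p ^ #S * (1 - p) ^ (Fintype.card V - #S)

theorem randomSubsetWeight_nonneg {p : ℝ} (hp₀ : 0 ≤ p) (hp₁ : p ≤ 1) (S : Finset V) :
    0 ≤ randomSubsetWeight p S := by
  unfold randomSubsetWeight
  have : 0 ≤ 1 - p := sub_nonneg.2 hp₁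
  positivity

theorem sum_randomSubsetWeight_superset [DecidableEq V] (p : ℝ) (A : Finset V) :
    ∑ S with A ⊆ S, randomSubsetWeight p S = p ^ #A := by
  simp [randomSubsetWeight, sum_superset_pow_mul_pow]

theorem sum_randomSubsetWeight (p : ℝ) : ∑ S : Finset V, randomSubsetWeight p S = 1 := by
  classical
  simpa using sum_randomSubsetWeight_superset (V := V) p ∅

theorem sum_randomSubsetWeight_mul_card_filter_subset [DecidableEq V] (p : ℝ)
    (F : Finset (Finset V)) :
    ∑ S, randomSubsetWeight p S * #{A ∈ F | A ⊆ S} = ∑ A ∈ F, p ^ #A := by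
  simp_rw [← sum_boole, mul_sum, mul_boole]
  rw [sum_comm]
  refine sum_congr rfl fun A _ => ?_
  rw [← sum_filter, sum_randomSubsetWeight_superset]

theorem sum_randomSubsetWeight_mul_card (p : ℝ) :
    ∑ S : Finset V, randomSubsetWeight p S * #S = p * Fintype.card V := by
  classical
  have hsingletons (S : Finset V) :
      #{A ∈ (univ : Finset V).map ⟨singleton, singleton_injective⟩ | A ⊆ S} = #S := by
    rw [filter_map, card_map]
    congr 1
    ext; simp
  simpa [hsingletons, mul_comm] using sum_randomSubsetWeight_mul_card_filter_subset p
    ((univ : Finset V).map ⟨singleton, singleton_injective⟩)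

theorem card_le_indepNum [DecidableEq V] {E : Finset (Finset V)} {I : Finset V}
    (hI : ∀ e ∈ E, ¬ e ⊆ I) : #I ≤ indepNum E :=
  le_csSup ⟨Fintype.card V, by rintro _ ⟨J, -, rfl⟩; exact card_le_univ J⟩ ⟨I, hI, rfl⟩

/-- Deleting one vertex from each edge inside `S` leaves an independent set. -/
theorem card_le_indepNum_add_card_filter_subset [DecidableEq V] {E : Finset (Finset V)}
    (hE : ∀ e ∈ E, e.Nonempty) (S : Finset V) : #S ≤ indepNum E + #{e ∈ E | e ⊆ S} := by
  set B := {e ∈ E | e ⊆ S}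
  choose f hf using fun e (he : e ∈ B) => hE e (mem_filter.1 he).1
  set D := B.attach.image fun e => f e.1 e.2
  have hindep : ∀ e ∈ E, ¬ e ⊆ S \ D := by
    intro e he heS
    have heB : e ∈ B := mem_filter.2 ⟨he, heS.trans sdiff_subset⟩
    exact (mem_sdiff.1 (heS (hf e heB))).2 (mem_image.2 ⟨⟨e, heB⟩, mem_attach _ _, rfl⟩)
  calc #S ≤ #(S \ D) + #D := card_le_card_sdiff_add_card
    _ ≤ indepNum E + #B :=
      add_le_add (card_le_indepNum hindep) (card_image_le.trans_eq card_attach)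

theorem mul_card_sub_sum_pow_card_le_indepNum [DecidableEq V] {E : Finset (Finset V)}
    (hE : ∀ e ∈ E, e.Nonempty) {p : ℝ} (hp₀ : 0 ≤ p) (hp₁ : p ≤ 1) :
    p * Fintype.card V - ∑ e ∈ E, p ^ #e ≤ indepNum E :=
  calc p * Fintype.card V - ∑ e ∈ E, p ^ #e
      = ∑ S, randomSubsetWeight p S * ((#S : ℝ) - #{e ∈ E | e ⊆ S}) := by
        simp only [mul_sub, sum_sub_distrib, sum_randomSubsetWeight_mul_card,
          sum_randomSubsetWeight_mul_card_filter_subset]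
    _ ≤ ∑ S, randomSubsetWeight p S * (indepNum E : ℝ) := by
        gcongr with S
        · exact randomSubsetWeight_nonneg hp₀ hp₁ S
        · rw [sub_le_iff_le_add]
          exact_mod_cast card_le_indepNum_add_card_filter_subset hE S
    _ = indepNum E := by rw [← sum_mul, sum_randomSubsetWeight, one_mul]

theorem stmt0_general (k N : ℕ) (hk : 2 ≤ k)
    (E : Finset (Finset (Fin N))) (hunif : ∀ e ∈ E, e.card = k)
    (t : ℝ) (ht : 1 ≤ t)
    (havg : t ^ (k - 1) = (k : ℝ) * E.card / N) :
    ((k : ℝ) - 1) / k * ((N : ℝ) / t) ≤ (indepNum E : ℝ) := by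
  have ht₀ : 0 < t := one_pos.trans_le ht
  have hN : (N : ℝ) ≠ 0 := by
    rintro hN
    rw [hN, div_zero] at havg
    exact (pow_pos ht₀ _).ne' havg
  have hE : ∀ e ∈ E, e.Nonempty := fun e he => card_pos.1 (by rw [hunif e he]; omega)
  have hbound := mul_card_sub_sum_pow_card_le_indepNum hE (inv_nonneg.2 ht₀.le)
    (inv_le_one_of_one_le₀ ht)
  rw [sum_congr rfl fun e he => by rw [hunif e he], sum_const, nsmul_eq_mul,
    Fintype.card_fin] at hbound
  obtain ⟨m, rfl⟩ : ∃ m, k = m + 1 := ⟨k - 1, by omega⟩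
  have hEcard : (#E : ℝ) = N * t ^ m / (m + 1) := by
    rw [Nat.add_sub_cancel] at havg
    rw [havg]
    push_cast
    field_simp
  convert hbound using 1
  rw [hEcard, inv_pow, pow_succ]
  push_cast
  field_simp

/-- Turán/Spencer bound: a `k`-uniform hypergraph on `N` vertices with average degree
`t^{k-1} = k|E_k|/N`, `t ≥ 1`, has independence number at least `((k-1)/k)·(N/t)`. -/
theorem stmt0 (k N : ℕ) (hk : 2 ≤ k) (hN : 0 < N)
    (E : Finset (Finset (Fin N))) (hunif : ∀ e ∈ E, e.card = k)
    (t : ℝ) (ht : 1 ≤ t)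
    (havg : t ^ (k - 1) = (k : ℝ) * E.card / N) :
    ((k : ℝ) - 1) / k * ((N : ℝ) / t) ≤ (indepNum E : ℝ) :=
  stmt0_general k N hk E hunif t ht havg
end

section
/- Fix an integer k ≥ 2. There exists a constant C'_k > 0, depending only on k, such that the following holds. Let T be a real number with 1 < T < 1.5 and let H = (V, E_2 ∪ … ∪ E_k) be a hypergraph on N = |V| vertices, where E_i is the set of edges of size i, such that H has no 2-cycles and contains neither 3-cycles nor 4-cycles all of whose edges are 2-element edges. If the average degrees t_i^{i−1} := i·|E_i|/N satisfy t_i^{i−1} ≤ T^{i−1}·(ln T)^{(k−i)/(k−1)} for i = 2, …, k, then α(H) ≥ C'_k·N. -/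
/-- A `j`-cycle in the hypergraph with edge set `E`: pairwise distinct edges
`e 0, …, e (j-1)` and pairwise distinct vertices `v 0, …, v (j-1)` with
`v i ∈ e i ∩ e (i+1)` (cyclically). -/
def HasCycle {V : Type*} [DecidableEq V] (E : Finset (Finset V)) (j : ℕ) : Prop :=
  ∃ (e : ZMod j → Finset V) (v : ZMod j → V),
    Function.Injective e ∧ Function.Injective v ∧
    (∀ i, e i ∈ E) ∧ (∀ i, v i ∈ e i ∧ v i ∈ e (i + 1))

/-- A `j`-cycle all of whose edges are `2`-element edges. -/
def HasGraphCycle {V : Type*} [DecidableEq V] (E : Finset (Finset V)) (j : ℕ) : Prop :=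
  ∃ (e : ZMod j → Finset V) (v : ZMod j → V),
    Function.Injective e ∧ Function.Injective v ∧
    (∀ i, e i ∈ E ∧ (e i).card = 2) ∧ (∀ i, v i ∈ e i ∧ v i ∈ e (i + 1))

/-- partial sums of the geometric-type series, with potential. -/
lemma geomAux (m : ℕ) :
    ∑ i ∈ Finset.Icc 2 (m + 5), ((3:ℝ)/4) ^ (i - 1) / (2 * i) ≤
      9/20 - ((3:ℝ)/4) ^ (m + 4) / 4 := by
  induction m with
  | zero =>
      norm_num [Finset.sum_Icc_succ_top, Finset.Icc_self]
  | succ m ih =>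
      have h5 : 2 ≤ m + 5 + 1 := by omega
      have : m + 1 + 5 = (m + 5) + 1 := by omega
      rw [this, Finset.sum_Icc_succ_top (by omega)]
      have hterm : ((3:ℝ)/4) ^ (m + 5 + 1 - 1) / (2 * ((m:ℝ) + 5 + 1)) +
          ((3:ℝ)/4) ^ (m + 1 + 4) / 4 ≤ ((3:ℝ)/4) ^ (m + 4) / 4 := by
        have hpow : ((3:ℝ)/4) ^ (m + 5 + 1 - 1) = ((3:ℝ)/4) ^ (m + 4) * (3/4) := by
          rw [show m + 5 + 1 - 1 = (m+4) + 1 by omega, pow_succ]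
        have hpow2 : ((3:ℝ)/4) ^ (m + 1 + 4) = ((3:ℝ)/4) ^ (m + 4) * (3/4) := by
          rw [show m + 1 + 4 = (m+4) + 1 by omega, pow_succ]
        rw [hpow, hpow2]
        have hp : (0:ℝ) < ((3:ℝ)/4) ^ (m + 4) := by positivity
        have hm : (12:ℝ) ≤ 2 * ((m:ℝ) + 5 + 1) := by
          have : (0:ℝ) ≤ (m:ℝ) := Nat.cast_nonneg m
          linarith
        have hfrac : ((3:ℝ)/4) / (2 * ((m:ℝ) + 5 + 1)) ≤ (3/4) / 12 := by
          apply div_le_div_of_nonneg_left (by norm_num) (by norm_num) hm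
        calc ((3:ℝ)/4) ^ (m + 4) * (3/4) / (2 * ((m:ℝ) + 5 + 1)) +
              ((3:ℝ)/4) ^ (m + 4) * (3/4) / 4
            = ((3:ℝ)/4) ^ (m + 4) * ((3/4) / (2 * ((m:ℝ) + 5 + 1))) +
              ((3:ℝ)/4) ^ (m + 4) * (3/4) / 4 := by ring
          _ ≤ ((3:ℝ)/4) ^ (m + 4) * ((3/4)/12) + ((3:ℝ)/4) ^ (m + 4) * (3/4) / 4 := by
              nlinarith [hp, hfrac]
          _ = ((3:ℝ)/4) ^ (m + 4) / 4 := by ring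
      push_cast
      push_cast at ih hterm
      linarith

lemma geomBound (k : ℕ) :
    ∑ i ∈ Finset.Icc 2 k, ((3:ℝ)/4) ^ (i - 1) / (2 * i) ≤ 9/20 := by
  rcases le_or_gt k 5 with hk | hk
  · have hsub : Finset.Icc 2 k ⊆ Finset.Icc 2 5 := Finset.Icc_subset_Icc_right hk
    refine le_trans (Finset.sum_le_sum_of_subset_of_nonneg hsub
      fun i _ _ => by positivity) ?_
    have := geomAux 0
    norm_num at this ⊢
    linarith [this]
  · obtain ⟨m, rfl⟩ : ∃ m, k = m + 5 := ⟨k - 5, by omega⟩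
    have := geomAux m
    have hp : (0:ℝ) ≤ ((3:ℝ)/4) ^ (m + 4) / 4 := by positivity
    linarith

open Finset in

open Finset

lemma cardFilterPowerset {α : Type*} [DecidableEq α] {e u : Finset α} (h : e ⊆ u) :
    ((u.powerset.filter fun S => e ⊆ S).card) = 2 ^ (u.card - e.card) := by
  rw [← Finset.Icc_eq_filter_powerset, Finset.card_Icc_finset h]

-- averaging identity
lemma avgSum {N : ℕ} (E : Finset (Finset (Fin N))) :
    ∑ S ∈ (Finset.univ : Finset (Fin N)).powerset,
        ((S.card : ℝ) - ((E.filter fun e => e ⊆ S).card : ℝ))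
      = (N : ℝ) * 2 ^ (N - 1) - ∑ e ∈ E, (2:ℝ) ^ (N - e.card) := by
  have hN : (Finset.univ : Finset (Fin N)).card = N := by simp
  rw [Finset.sum_sub_distrib]
  congr 1
  · have hS : ∀ S ∈ (Finset.univ : Finset (Fin N)).powerset,
        (S.card : ℝ) = ∑ v ∈ (Finset.univ : Finset (Fin N)), if v ∈ S then (1:ℝ) else 0 := by
      intro S _
      rw [Finset.sum_boole]
      simp [Finset.filter_univ_mem]
    rw [Finset.sum_congr rfl hS, Finset.sum_comm]
    have hv : ∀ v ∈ (Finset.univ : Finset (Fin N)),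
        (∑ S ∈ (Finset.univ : Finset (Fin N)).powerset, if v ∈ S then (1:ℝ) else 0)
          = (2:ℝ) ^ (N - 1) := by
      intro v _
      rw [Finset.sum_boole]
      have : ((Finset.univ : Finset (Fin N)).powerset.filter fun S => v ∈ S)
          = ((Finset.univ : Finset (Fin N)).powerset.filter fun S => {v} ⊆ S) := by
        apply Finset.filter_congr; intro S _; simp
      rw [this, cardFilterPowerset (by simp)]
      simp [hN]
    rw [Finset.sum_congr rfl hv, Finset.sum_const, hN]
    simp [mul_comm]
  · have hS : ∀ S ∈ (Finset.univ : Finset (Fin N)).powerset,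
        (((E.filter fun e => e ⊆ S).card : ℝ))
          = ∑ e ∈ E, if e ⊆ S then (1:ℝ) else 0 := by
      intro S _
      rw [Finset.sum_boole]
    rw [Finset.sum_congr rfl hS, Finset.sum_comm]
    apply Finset.sum_congr rfl
    intro e _
    rw [Finset.sum_boole, cardFilterPowerset (Finset.subset_univ e), hN]
    norm_num


/-- Remark after the main theorem: for fixed `k ≥ 2` there is `C'_k > 0` such that every
hypergraph on `N` vertices with edges of sizes `2,…,k`, with no 2-cycles and with no 3- or
4-cycles of 2-element edges, whose average degrees satisfy
`t_i^{i-1} ≤ T^{i-1} (ln T)^{(k-i)/(k-1)}` for some `1 < T < 1.5`, has independence number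
at least `C'_k · N`. -/
theorem stmt4 (k : ℕ) (hk : 2 ≤ k) :
    ∃ C : ℝ, 0 < C ∧
      ∀ T : ℝ, 1 < T → T < 1.5 → ∀ N : ℕ, 0 < N →
        ∀ E : Finset (Finset (Fin N)),
          (∀ e ∈ E, 2 ≤ e.card ∧ e.card ≤ k) →
          ¬ HasCycle E 2 → ¬ HasGraphCycle E 3 → ¬ HasGraphCycle E 4 →
          (∀ i : ℕ, 2 ≤ i → i ≤ k →
            (i : ℝ) * (E.filter fun e => e.card = i).card / N ≤
              T ^ (i - 1) * Real.log T ^ (((k : ℝ) - i) / ((k : ℝ) - 1))) →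
          C * (N : ℝ) ≤ (indepNum E : ℝ) := by
  refine ⟨1/20, by norm_num, ?_⟩
  intro T hT1 hT2 N hN E hsize _ _ _ hdeg
  have hNpos : (0:ℝ) < N := by exact_mod_cast hN
  -- step 1: edge count bounds
  have hlogT0 : 0 ≤ Real.log T := Real.log_nonneg (le_of_lt hT1)
  have hlogT1 : Real.log T ≤ 1 :=
    le_trans (Real.log_le_sub_one_of_pos (by linarith)) (by linarith)
  have hm : ∀ i : ℕ, 2 ≤ i → i ≤ k →
      ((E.filter fun e => e.card = i).card : ℝ) ≤ (1.5:ℝ)^(i-1) * N / i := by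
    intro i h2 hik
    have hd := hdeg i h2 hik
    have hpow : T ^ (i-1) ≤ (1.5:ℝ)^(i-1) := pow_le_pow_left₀ (by linarith) (le_of_lt hT2) _
    have hexp : (0:ℝ) ≤ ((k:ℝ) - i) / ((k:ℝ) - 1) := by
      have h1 : (i:ℝ) ≤ (k:ℝ) := by exact_mod_cast hik
      have h2' : (1:ℝ) ≤ (k:ℝ) := by exact_mod_cast le_trans (by norm_num) hk
      apply div_nonneg <;> linarith
    have hr : Real.log T ^ (((k:ℝ)-i)/((k:ℝ)-1)) ≤ 1 := Real.rpow_le_one hlogT0 hlogT1 hexp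
    have hTpos : (0:ℝ) ≤ T ^ (i-1) := by positivity
    have key : (i : ℝ) * ((E.filter fun e => e.card = i).card : ℝ) / N ≤ (1.5:ℝ)^(i-1) := by
      calc (i : ℝ) * ((E.filter fun e => e.card = i).card : ℝ) / N
          ≤ T ^ (i-1) * Real.log T ^ (((k:ℝ)-i)/((k:ℝ)-1)) := hd
        _ ≤ T ^ (i-1) * 1 := by nlinarith
        _ ≤ (1.5:ℝ)^(i-1) := by rw [mul_one]; exact hpow
    have hipos : (0:ℝ) < i := by exact_mod_cast lt_of_lt_of_le (by norm_num) h2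
    rw [div_le_iff₀ hNpos] at key
    rw [le_div_iff₀ hipos]
    nlinarith
  -- step 2: bound the weighted edge sum
  have hedge : ∑ e ∈ E, (2:ℝ) ^ (N - e.card) ≤ (9/20) * ((N:ℝ) * 2 ^ N) := by
    have hrw : ∀ e ∈ E, (2:ℝ) ^ (N - e.card) = (2:ℝ)^N / 2 ^ e.card := by
      intro e he
      have hle : e.card ≤ N := by
        simpa using Finset.card_le_card (Finset.subset_univ e)
      rw [eq_div_iff (by positivity), ← pow_add, Nat.sub_add_cancel hle]
    rw [Finset.sum_congr rfl hrw]
    have hmaps : ∀ e ∈ E, e.card ∈ Finset.Icc 2 k := by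
      intro e he; rw [Finset.mem_Icc]; exact hsize e he
    rw [← Finset.sum_fiberwise_of_maps_to hmaps (fun e => (2:ℝ)^N / 2 ^ e.card)]
    have hinner : ∀ i ∈ Finset.Icc 2 k,
        (∑ e ∈ E.filter fun e => e.card = i, (2:ℝ)^N / 2 ^ e.card)
          ≤ (N:ℝ) * 2^N * (((3:ℝ)/4) ^ (i-1) / (2 * i)) := by
      intro i hi
      rw [Finset.mem_Icc] at hi
      have : ∀ e ∈ E.filter fun e => e.card = i, (2:ℝ)^N / 2 ^ e.card = (2:ℝ)^N / 2 ^ i := by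
        intro e he; rw [Finset.mem_filter] at he; rw [he.2]
      rw [Finset.sum_congr rfl this, Finset.sum_const, nsmul_eq_mul]
      have hc := hm i hi.1 hi.2
      have hipos : (0:ℝ) < i := by exact_mod_cast lt_of_lt_of_le (by norm_num) hi.1
      have h2pos : (0:ℝ) < (2:ℝ)^N / 2 ^ i := by positivity
      calc ((E.filter fun e => e.card = i).card : ℝ) * ((2:ℝ)^N / 2 ^ i)
          ≤ ((1.5:ℝ)^(i-1) * N / i) * ((2:ℝ)^N / 2 ^ i) := by
            apply mul_le_mul_of_nonneg_right hc (le_of_lt h2pos)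
        _ = (N:ℝ) * 2^N * (((3:ℝ)/4) ^ (i-1) / (2 * i)) := by
            have h34 : ((3:ℝ)/4)^(i-1) = (1.5:ℝ)^(i-1) / (2:ℝ)^(i-1) := by
              rw [← div_pow]; norm_num
            have h2i : (2:ℝ)^i = (2:ℝ)^(i-1) * 2 := by
              rw [← pow_succ]; congr 1; omega
            have hi0 : (i:ℝ) ≠ 0 := ne_of_gt hipos
            have hp0 : ((2:ℝ)^(i-1)) ≠ 0 := by positivity
            rw [h2i, h34]
            field_simp

    calc ∑ i ∈ Finset.Icc 2 k, ∑ e ∈ E.filter fun e => e.card = i, (2:ℝ)^N / 2 ^ e.card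
        ≤ ∑ i ∈ Finset.Icc 2 k, (N:ℝ) * 2^N * (((3:ℝ)/4) ^ (i-1) / (2 * i)) :=
          Finset.sum_le_sum hinner
      _ = (N:ℝ) * 2^N * ∑ i ∈ Finset.Icc 2 k, ((3:ℝ)/4) ^ (i-1) / (2 * i) := by
          rw [Finset.mul_sum]
      _ ≤ (N:ℝ) * 2^N * (9/20) := by
          apply mul_le_mul_of_nonneg_left (geomBound k) (by positivity)
      _ = (9/20) * ((N:ℝ) * 2 ^ N) := by ring
  -- step 3: pigeonhole
  have havg : ∑ S ∈ (Finset.univ : Finset (Fin N)).powerset, ((N:ℝ)/20)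
      ≤ ∑ S ∈ (Finset.univ : Finset (Fin N)).powerset,
          ((S.card : ℝ) - ((E.filter fun e => e ⊆ S).card : ℝ)) := by
    rw [avgSum, Finset.sum_const, Finset.card_powerset, Finset.card_univ,
      Fintype.card_fin, nsmul_eq_mul]
    have h2N : (2:ℝ)^(N-1) * 2 = 2^N := by
      rw [← pow_succ, Nat.sub_add_cancel (by omega)]
    push_cast
    nlinarith [hedge, h2N]
  obtain ⟨S, _, hS⟩ := Finset.exists_le_of_sum_le
    (Finset.powerset_nonempty _) havg
  -- step 4: construct independent set
  set Es := E.filter fun e => e ⊆ S with hEs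
  have hv0 : (0:ℕ) < N := hN
  let pick : Finset (Fin N) → Fin N := fun e => if h : e.Nonempty then h.choose else ⟨0, hv0⟩
  have hpick : ∀ e ∈ E, pick e ∈ e := by
    intro e he
    have hne : e.Nonempty := Finset.card_pos.mp (lt_of_lt_of_le (by norm_num) (hsize e he).1)
    simp only [pick, dif_pos hne]
    exact hne.choose_spec
  set I := S \ Es.image pick with hI
  have hind : ∀ e ∈ E, ¬ e ⊆ I := by
    intro e he hsub
    have heS : e ⊆ S := hsub.trans (Finset.sdiff_subset)
    have heEs : e ∈ Es := Finset.mem_filter.mpr ⟨he, heS⟩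
    have h1 : pick e ∈ I := hsub (hpick e he)
    have h2 : pick e ∈ Es.image pick := Finset.mem_image_of_mem pick heEs
    rw [hI, Finset.mem_sdiff] at h1
    exact h1.2 h2
  have hcard : (S.card : ℝ) - (Es.card : ℝ) ≤ (I.card : ℝ) := by
    have h1 : S.card ≤ I.card + (Es.image pick).card := by
      calc S.card ≤ (S \ Es.image pick ∪ Es.image pick).card :=
            Finset.card_le_card (fun x hx => by
              by_cases h : x ∈ Es.image pick
              · exact Finset.mem_union_right _ h
              · exact Finset.mem_union_left _ (Finset.mem_sdiff.mpr ⟨hx, h⟩))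
        _ = I.card + (Es.image pick).card := by
            rw [hI, Finset.card_sdiff_add_card]
            congr 1
            ext x
            simp only [Finset.mem_union, Finset.mem_sdiff]
            tauto
    have h2 : (Es.image pick).card ≤ Es.card := Finset.card_image_le
    have := le_trans h1 (Nat.add_le_add_left h2 _)
    push_cast
    have : (S.card : ℝ) ≤ (I.card : ℝ) + (Es.card : ℝ) := by exact_mod_cast this
    linarith
  -- step 5: conclude via indepNum
  have hmem : (I.card : ℕ) ∈ {m | ∃ J : Finset (Fin N), (∀ e ∈ E, ¬ e ⊆ J) ∧ J.card = m} :=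
    ⟨I, hind, rfl⟩
  have hbdd : BddAbove {m | ∃ J : Finset (Fin N), (∀ e ∈ E, ¬ e ⊆ J) ∧ J.card = m} := by
    refine ⟨N, fun m hm' => ?_⟩
    obtain ⟨J, _, hJ⟩ := hm'
    rw [← hJ]
    simpa using Finset.card_le_card (Finset.subset_univ J)
  have hle : I.card ≤ indepNum E := le_csSup hbdd hmem
  have : (N:ℝ)/20 ≤ (I.card : ℝ) := by
    refine le_trans ?_ hcard
    refine le_trans hS ?_
    rw [hEs]
  calc (1/20 : ℝ) * N = (N:ℝ)/20 := by ring
    _ ≤ (I.card : ℝ) := this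
    _ ≤ (indepNum E : ℝ) := by exact_mod_cast hle
end

section
/- Fix an integer k ≥ 2. There exist a threshold T_0(k) and for each T > T_0(k) a threshold N_0(k, T) such that the following holds. Let T > T_0(k), let N > N_0(k, T) be an integer, set s := 10^{−3}·ln T, and let c_2, …, c_k be constants with 0 < c_i < (1/(16·k²))·C(k−1, i−1)·10^{−3(k−i)/(k−1)} for each i. Let H = (V, E_2 ∪ … ∪ E_k) be a hypergraph with N vertices whose average degrees t_i^{i−1} := i·|E_i|/N satisfy t_i^{i−1} ≤ c_i·T^{i−1}·(ln T)^{(k−i)/(k−1)} for i = 2, …, k. Then there exists a subset V* ⊆ V with n := |V*| such that (a) (3/4)·N/e^s ≤ n ≤ N/e^s, and (b) for each vertex v ∈ V* and each i ∈ {2, …, k}, the number d_i*(v) of size-i edges of the induced subhypergraph H[V*] containing v satisfies d_i*(v) ≤ C(k−1, i−1)·s^{(k−i)/(k−1)}·(T/e^s)^{i−1}. -/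
open Finset

noncomputable def wt (n : ℕ) (p : ℝ) (S : Finset (Fin n)) : ℝ :=
  p ^ S.card * (1 - p) ^ (n - S.card)

lemma sum_wt_contains (n : ℕ) (p : ℝ) (A : Finset (Fin n)) :
    ∑ S ∈ (univ : Finset (Fin n)).powerset,
      (if A ⊆ S then wt n p S else 0) = p ^ A.card := by
  classical
  have h := Finset.prod_add (fun _ : Fin n => p)
    (fun i : Fin n => if i ∈ A then (0:ℝ) else 1 - p) univ
  have hL : ∏ i ∈ (univ : Finset (Fin n)), (p + if i ∈ A then (0:ℝ) else 1 - p)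
      = p ^ A.card := by
    have : ∀ i : Fin n, (p + if i ∈ A then (0:ℝ) else 1 - p)
        = if i ∈ A then p else 1 := by
      intro i; by_cases hi : i ∈ A <;> simp [hi]
    rw [Finset.prod_congr rfl fun i _ => this i]
    rw [Finset.prod_ite_mem]
    simp [Finset.univ_inter]
  have hR : ∀ S ∈ (univ : Finset (Fin n)).powerset,
      (∏ _i ∈ S, p) * (∏ i ∈ univ \ S, if i ∈ A then (0:ℝ) else 1 - p)
        = if A ⊆ S then wt n p S else 0 := by
    intro S _
    by_cases hAS : A ⊆ S
    · have : ∀ i ∈ univ \ S, (if i ∈ A then (0:ℝ) else 1 - p) = 1 - p := by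
        intro i hi
        simp only [Finset.mem_sdiff] at hi
        have : i ∉ A := fun h => hi.2 (hAS h)
        simp [this]
      rw [Finset.prod_congr rfl this, Finset.prod_const, Finset.prod_const,
        Finset.card_sdiff_of_subset (Finset.subset_univ S), Finset.card_univ, Fintype.card_fin]
      simp [wt, hAS]
    · obtain ⟨a, haA, haS⟩ := Finset.not_subset.mp hAS
      have ha : a ∈ univ \ S := Finset.mem_sdiff.mpr ⟨Finset.mem_univ a, haS⟩
      rw [Finset.prod_eq_zero ha (by simp [haA])]
      simp [hAS]
  rw [← Finset.sum_congr rfl hR, ← h, hL]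

lemma sum_wt_one (n : ℕ) (p : ℝ) :
    ∑ S ∈ (univ : Finset (Fin n)).powerset, wt n p S = 1 := by
  have h := sum_wt_contains n p ∅
  simpa using h

lemma card_eq_sum_ind (n : ℕ) (S : Finset (Fin n)) :
    (S.card : ℝ) = ∑ v ∈ (univ : Finset (Fin n)), (if v ∈ S then (1:ℝ) else 0) := by
  rw [Finset.sum_boole]
  congr 1
  simp [Finset.filter_mem_eq_inter]

lemma sum_wt_card (n : ℕ) (p : ℝ) :
    ∑ S ∈ (univ : Finset (Fin n)).powerset, wt n p S * (S.card : ℝ) = n * p := by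
  classical
  have h1 : ∀ S ∈ (univ : Finset (Fin n)).powerset,
      wt n p S * (S.card : ℝ)
        = ∑ v ∈ (univ : Finset (Fin n)), (if {v} ⊆ S then wt n p S else 0) := by
    intro S _
    rw [card_eq_sum_ind, Finset.mul_sum]
    refine Finset.sum_congr rfl fun v _ => ?_
    by_cases hv : v ∈ S <;> simp [hv]
  rw [Finset.sum_congr rfl h1, Finset.sum_comm]
  rw [Finset.sum_congr rfl fun v _ => sum_wt_contains n p {v}]
  simp [mul_comm]

lemma sum_wt_card_sq (n : ℕ) (p : ℝ) :
    ∑ S ∈ (univ : Finset (Fin n)).powerset, wt n p S * (S.card : ℝ)^2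
      = n * p + ((n:ℝ)^2 - n) * p^2 := by
  classical
  have h1 : ∀ S ∈ (univ : Finset (Fin n)).powerset,
      wt n p S * (S.card : ℝ)^2
        = ∑ u ∈ (univ : Finset (Fin n)), ∑ v ∈ (univ : Finset (Fin n)),
            (if ({u, v} : Finset (Fin n)) ⊆ S then wt n p S else 0) := by
    intro S _
    rw [sq, card_eq_sum_ind, Finset.sum_mul_sum]
    rw [Finset.mul_sum]
    refine Finset.sum_congr rfl fun u _ => ?_
    rw [Finset.mul_sum]
    refine Finset.sum_congr rfl fun v _ => ?_
    by_cases hu : u ∈ S <;> by_cases hv : v ∈ S <;>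
      simp [hu, hv, Finset.insert_subset_iff]
  rw [Finset.sum_congr rfl h1, Finset.sum_comm]
  have h2 : ∀ u ∈ (univ : Finset (Fin n)),
      (∑ S ∈ (univ : Finset (Fin n)).powerset, ∑ v ∈ (univ : Finset (Fin n)),
        (if ({u, v} : Finset (Fin n)) ⊆ S then wt n p S else 0))
      = p + ((n:ℝ) - 1) * p^2 := by
    intro u _
    rw [Finset.sum_comm]
    have h3 : ∀ v ∈ (univ : Finset (Fin n)),
        (∑ S ∈ (univ : Finset (Fin n)).powerset,
          (if ({u, v} : Finset (Fin n)) ⊆ S then wt n p S else 0))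
        = if v = u then p else p^2 := by
      intro v _
      rw [sum_wt_contains n p {u, v}]
      by_cases hvu : v = u
      · simp [hvu]
      · have : ({u, v} : Finset (Fin n)).card = 2 := by
          rw [Finset.card_insert_of_notMem (by simp [Ne.symm hvu])]
          simp
        simp [this, hvu]
    rw [Finset.sum_congr rfl h3]
    have : ∀ v ∈ (univ : Finset (Fin n)), (if v = u then p else p^2)
        = p^2 + (if v = u then p - p^2 else 0) := by
      intro v _; by_cases hv : v = u <;> simp [hv]
    rw [Finset.sum_congr rfl this, Finset.sum_add_distrib, Finset.sum_const,
      Finset.sum_ite_eq' univ u (fun _ => p - p^2)]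
    simp [Finset.card_univ]
    ring
  rw [Finset.sum_congr rfl h2, Finset.sum_const]
  simp [Finset.card_univ]
  ring

lemma sum_wt_var (n : ℕ) (p : ℝ) :
    ∑ S ∈ (univ : Finset (Fin n)).powerset,
      wt n p S * ((S.card : ℝ) - n * p)^2 = n * p * (1 - p) := by
  have expand : ∀ S ∈ (univ : Finset (Fin n)).powerset,
      wt n p S * ((S.card : ℝ) - n * p)^2
        = wt n p S * (S.card : ℝ)^2
          - (2 * (n * p)) * (wt n p S * (S.card : ℝ))
          + (n*p)^2 * wt n p S := by
    intro S _; ring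
  rw [Finset.sum_congr rfl expand]
  rw [Finset.sum_add_distrib, Finset.sum_sub_distrib, ← Finset.mul_sum, ← Finset.mul_sum]
  rw [sum_wt_card_sq, sum_wt_card, sum_wt_one]
  ring

lemma sum_wt_filter (n : ℕ) (p : ℝ) (E' : Finset (Finset (Fin n))) :
    ∑ S ∈ (univ : Finset (Fin n)).powerset,
      wt n p S * ((E'.filter (fun e => e ⊆ S)).card : ℝ)
      = ∑ e ∈ E', p ^ e.card := by
  classical
  have h1 : ∀ S ∈ (univ : Finset (Fin n)).powerset,
      wt n p S * ((E'.filter (fun e => e ⊆ S)).card : ℝ)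
      = ∑ e ∈ E', (if e ⊆ S then wt n p S else 0) := by
    intro S _
    rw [Finset.card_filter, Nat.cast_sum, Finset.mul_sum]
    refine Finset.sum_congr rfl fun e _ => ?_
    by_cases he : e ⊆ S <;> simp [he]
  rw [Finset.sum_congr rfl h1, Finset.sum_comm]
  exact Finset.sum_congr rfl fun e _ => sum_wt_contains n p e

set_option maxHeartbeats 1600000 in
/-- Degree-regularization lemma: for `k ≥ 2` there are `T₀(k)` and for each `T > T₀(k)`
an `N₀(k,T)` such that every hypergraph on `N > N₀` vertices with edges of sizes `2,…,k`
and average degrees `t_i^{i-1} ≤ c_i T^{i-1} (ln T)^{(k-i)/(k-1)}`, where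
`0 < c_i < (1/(16k²))·C(k-1,i-1)·10^{-3(k-i)/(k-1)}`, contains an induced subhypergraph
on a vertex set `V*` with `(3/4)N/e^s ≤ |V*| ≤ N/e^s` (where `s = 10⁻³ ln T`) all of
whose degrees satisfy `d_i*(v) ≤ C(k-1,i-1) s^{(k-i)/(k-1)} (T/e^s)^{i-1}`. -/
theorem stmt11 (k : ℕ) (hk : 2 ≤ k) :
    ∃ T₀ : ℝ, ∀ T : ℝ, T₀ < T → ∃ N₀ : ℕ, ∀ N : ℕ, N₀ < N →
      ∀ s : ℝ, s = 0.001 * Real.log T →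
      ∀ c : ℕ → ℝ,
        (∀ i : ℕ, 2 ≤ i → i ≤ k → 0 < c i ∧
          c i < 1 / (16 * (k : ℝ) ^ 2) * (Nat.choose (k - 1) (i - 1) : ℝ) *
            (10 : ℝ) ^ (-(3 * ((k : ℝ) - i) / ((k : ℝ) - 1)))) →
      ∀ E : Finset (Finset (Fin N)),
        (∀ e ∈ E, 2 ≤ e.card ∧ e.card ≤ k) →
        (∀ i : ℕ, 2 ≤ i → i ≤ k →
          (i : ℝ) * (E.filter fun e => e.card = i).card / N ≤
            c i * T ^ (i - 1) * Real.log T ^ (((k : ℝ) - i) / ((k : ℝ) - 1))) →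
        ∃ Vstar : Finset (Fin N),
          (3 / 4 * ((N : ℝ) / Real.exp s) ≤ (Vstar.card : ℝ) ∧
            (Vstar.card : ℝ) ≤ (N : ℝ) / Real.exp s) ∧
          ∀ v ∈ Vstar, ∀ i : ℕ, 2 ≤ i → i ≤ k →
            ((E.filter fun e => e ⊆ Vstar ∧ e.card = i ∧ v ∈ e).card : ℝ) ≤
              (Nat.choose (k - 1) (i - 1) : ℝ) * s ^ (((k : ℝ) - i) / ((k : ℝ) - 1)) *
                (T / Real.exp s) ^ (i - 1) := by
  classical
  refine ⟨Real.exp 1, fun T hT => ?_⟩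
  refine ⟨⌈(2048:ℝ) * Real.exp (0.001 * Real.log T)⌉₊, fun N hN s hs c hc E hE hdeg => ?_⟩
  have hT1 : (1:ℝ) < T := lt_trans (by nlinarith [Real.add_one_le_exp (1:ℝ)]) hT
  have hT0 : (0:ℝ) < T := lt_trans one_pos hT1
  have hL : (0:ℝ) < Real.log T := Real.log_pos hT1
  have hs0 : 0 < s := by rw [hs]; positivity
  set es := Real.exp s with hes
  have hes0 : 0 < es := Real.exp_pos s
  set nbar := (N : ℝ) / es with hnbar_def
  have hNlb : (2048:ℝ) * es < N := by
    have h1 : ((⌈(2048:ℝ) * Real.exp (0.001 * Real.log T)⌉₊ : ℝ)) < N := by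
      exact_mod_cast Nat.cast_lt.mpr hN
    calc (2048:ℝ) * es = 2048 * Real.exp (0.001 * Real.log T) := by rw [hes, hs]
    _ ≤ ⌈(2048:ℝ) * Real.exp (0.001 * Real.log T)⌉₊ := Nat.le_ceil _
    _ < N := h1
  have hN0 : (0:ℝ) < N := lt_trans (by positivity) hNlb
  have hnbar : 2048 < nbar := by
    rw [hnbar_def, lt_div_iff₀ hes0]; linarith [hNlb]
  have hnbar0 : 0 < nbar := by linarith
  set p := 7/8 * Real.exp (-s) with hp_def
  have hp0 : 0 < p := by positivity
  have hexps : Real.exp (-s) < 1 := Real.exp_lt_one_iff.mpr (by linarith)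
  have hp1 : p < 1 := by rw [hp_def]; nlinarith [Real.exp_pos (-s)]
  have hq0 : 0 ≤ 1 - p := by linarith
  have hwt0 : ∀ S : Finset (Fin N), 0 ≤ wt N p S := by
    intro S; exact mul_nonneg (pow_nonneg hp0.le _) (pow_nonneg hq0 _)
  have hNp : (N:ℝ) * p = 7/8 * nbar := by
    rw [hp_def, hnbar_def, Real.exp_neg, hes]; field_simp
  set D : ℕ → ℝ := fun i => (Nat.choose (k - 1) (i - 1) : ℝ) *
      s ^ (((k : ℝ) - i) / ((k : ℝ) - 1)) * (T / es) ^ (i - 1) with hD_def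
  have hD0 : ∀ i, 2 ≤ i → i ≤ k → 0 < D i := by
    intro i h2 hik
    have hch : 0 < (Nat.choose (k - 1) (i - 1) : ℝ) := by
      exact_mod_cast Nat.choose_pos (by omega)
    have h1 : 0 < s ^ (((k : ℝ) - i) / ((k : ℝ) - 1)) := Real.rpow_pos_of_pos hs0 _
    have h2' : 0 < (T / es) ^ (i - 1) := pow_pos (by positivity) _
    positivity

  -- the key per-size inequality
  set Ei : ℕ → Finset (Finset (Fin N)) := fun i => E.filter (fun e => e.card = i) with hEi_def
  have hkey : ∀ i, 2 ≤ i → i ≤ k →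
      (i : ℝ) * ((Ei i).card : ℝ) * p ^ i ≤ (49 / (1024 * (k:ℝ)^2)) * nbar * D i := by
    intro i h2 hik
    set α : ℝ := ((k : ℝ) - i) / ((k : ℝ) - 1) with hα
    have havg := hdeg i h2 hik
    have hc' := (hc i h2 hik).2.le
    have h3 : (10:ℝ) ^ (3:ℝ) = 1000 := by
      rw [show (3:ℝ) = ((3:ℕ):ℝ) by norm_num, Real.rpow_natCast]; norm_num
    have h10 : (0.001:ℝ) = (10:ℝ) ^ (-3:ℝ) := by
      rw [Real.rpow_neg (by norm_num : (0:ℝ) ≤ 10), h3]; norm_num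
    have hBeq : (10:ℝ) ^ (-(3 * ((k : ℝ) - i) / ((k : ℝ) - 1))) = (0.001:ℝ) ^ α := by
      rw [h10, ← Real.rpow_mul (by norm_num : (0:ℝ) ≤ 10)]
      congr 1
      rw [hα]; ring
    have h1 : (i : ℝ) * ((Ei i).card : ℝ) ≤ c i * T ^ (i - 1) * Real.log T ^ α * N := by
      rw [hEi_def]
      exact (div_le_iff₀ hN0).mp havg
    obtain ⟨j, rfl⟩ : ∃ j, i = 1 + j := ⟨i - 1, by omega⟩
    have hj1 : 1 + j - 1 = j := by omega
    have hsa : s ^ α = (0.001:ℝ) ^ α * Real.log T ^ α := by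
      rw [hs, Real.mul_rpow (by norm_num) hL.le]
    have hnb : nbar = (N:ℝ) * Real.exp (-s) := by
      rw [hnbar_def, hes, Real.exp_neg, div_eq_mul_inv]
    have hdivT : T / es = T * Real.exp (-s) := by
      rw [hes, Real.exp_neg, div_eq_mul_inv]
    have hK0 : (0:ℝ) ≤ p ^ (1 + j) := pow_nonneg hp0.le _
    have hDpos : 0 < D (1+j) := hD0 (1+j) h2 hik
    have hch : (0:ℝ) ≤ (Nat.choose (k - 1) (1+j-1) : ℝ) := Nat.cast_nonneg _
    calc (↑(1+j) : ℝ) * ((Ei (1+j)).card : ℝ) * p ^ (1+j)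
        ≤ (c (1+j) * T ^ (1+j-1) * Real.log T ^ α * N) * p ^ (1+j) :=
          mul_le_mul_of_nonneg_right h1 hK0
      _ = c (1+j) * (T ^ (1+j-1) * Real.log T ^ α * N * p ^ (1+j)) := by ring
      _ ≤ (1 / (16 * (k : ℝ) ^ 2) * (Nat.choose (k - 1) (1+j-1) : ℝ) * (0.001:ℝ) ^ α)
            * (T ^ (1+j-1) * Real.log T ^ α * N * p ^ (1+j)) := by
          apply mul_le_mul_of_nonneg_right _ (by positivity)
          rw [← hBeq]
          exact hc'
      _ = (1 / (16 * (k : ℝ) ^ 2)) * (7/8)^(1+j) * nbar * D (1+j) := by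
          rw [hD_def]
          simp only [hj1]
          rw [hsa, hnb, hdivT, hp_def]
          ring
      _ ≤ (49 / (1024 * (k:ℝ)^2)) * nbar * D (1+j) := by
          have h78 : (7/8:ℝ)^(1+j) ≤ (7/8:ℝ)^2 :=
            pow_le_pow_of_le_one (by norm_num) (by norm_num) (by omega)
          have hk2 : (0:ℝ) < (k:ℝ)^2 := by
            have : (2:ℝ) ≤ k := by exact_mod_cast hk
            positivity
          have hmain : (1 / (16 * (k : ℝ) ^ 2)) * (7/8:ℝ)^(1+j) ≤ 49 / (1024 * (k:ℝ)^2) := by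
            calc (1 / (16 * (k : ℝ) ^ 2)) * (7/8:ℝ)^(1+j)
                ≤ (1 / (16 * (k : ℝ) ^ 2)) * (7/8:ℝ)^2 :=
                  mul_le_mul_of_nonneg_left h78 (by positivity)
              _ = 49 / (1024 * (k:ℝ)^2) := by ring
          apply mul_le_mul_of_nonneg_right _ hDpos.le
          exact mul_le_mul_of_nonneg_right hmain hnbar0.le
  -- the potential function Y
  set Y : Finset (Fin N) → ℝ := fun S =>
    ∑ i ∈ Icc 2 k, ((i:ℝ) * (((Ei i).filter (fun e => e ⊆ S)).card : ℝ)) / D i with hY_def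
  have hY0 : ∀ S, 0 ≤ Y S := by
    intro S
    apply Finset.sum_nonneg
    intro i hi
    obtain ⟨h2, hik⟩ := Finset.mem_Icc.mp hi
    exact div_nonneg (mul_nonneg (Nat.cast_nonneg _) (Nat.cast_nonneg _)) (hD0 i h2 hik).le
  -- expectation of Y
  have hEY : ∑ S ∈ (univ : Finset (Fin N)).powerset, wt N p S * Y S ≤ nbar / 64 := by
    have e1 : ∑ S ∈ (univ : Finset (Fin N)).powerset, wt N p S * Y S
        = ∑ i ∈ Icc 2 k, ((i:ℝ) * ((Ei i).card : ℝ) * p ^ i) / D i := by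
      have e2 : ∀ S ∈ (univ : Finset (Fin N)).powerset, wt N p S * Y S
          = ∑ i ∈ Icc 2 k, ((i:ℝ)/D i) * (wt N p S * (((Ei i).filter (fun e => e ⊆ S)).card : ℝ)) := by
        intro S _
        rw [hY_def, Finset.mul_sum]
        exact Finset.sum_congr rfl fun i _ => by ring
      rw [Finset.sum_congr rfl e2, Finset.sum_comm]
      refine Finset.sum_congr rfl fun i hi => ?_
      obtain ⟨h2, hik⟩ := Finset.mem_Icc.mp hi
      rw [← Finset.mul_sum, sum_wt_filter N p (Ei i)]
      have hcard : ∀ e ∈ Ei i, p ^ e.card = p ^ i := by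
        intro e he
        simp only [hEi_def, Finset.mem_filter] at he
        rw [he.2]
      have e3 : ∑ e ∈ Ei i, p ^ e.card = ((Ei i).card : ℝ) * p ^ i := by
        rw [Finset.sum_congr rfl hcard, Finset.sum_const, nsmul_eq_mul]
      rw [e3]; ring
    rw [e1]
    have e4 : ∀ i ∈ Icc 2 k, ((i:ℝ) * ((Ei i).card : ℝ) * p ^ i) / D i
        ≤ (49 / (1024 * (k:ℝ)^2)) * nbar := by
      intro i hi
      obtain ⟨h2, hik⟩ := Finset.mem_Icc.mp hi
      rw [div_le_iff₀ (hD0 i h2 hik)]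
      exact hkey i h2 hik
    calc ∑ i ∈ Icc 2 k, ((i:ℝ) * ((Ei i).card : ℝ) * p ^ i) / D i
        ≤ (Icc 2 k).card • ((49 / (1024 * (k:ℝ)^2)) * nbar) := Finset.sum_le_card_nsmul _ _ _ e4
      _ = ((k:ℝ) - 1) * ((49 / (1024 * (k:ℝ)^2)) * nbar) := by
          rw [Nat.card_Icc, nsmul_eq_mul]
          congr 1
          have : k + 1 - 2 = k - 1 := by omega
          rw [this, Nat.cast_sub (by omega : 1 ≤ k)]
          norm_num
      _ ≤ nbar / 64 := by
          have hk2 : (2:ℝ) ≤ k := by exact_mod_cast hk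
          have : ((k:ℝ) - 1) * 49 * 64 ≤ 1024 * (k:ℝ)^2 := by nlinarith
          have hkpos : (0:ℝ) < 1024 * (k:ℝ)^2 := by positivity
          have heq : ((k:ℝ) - 1) * ((49 / (1024 * (k:ℝ)^2)) * nbar)
              = (((k:ℝ)-1)*49*nbar)/(1024*(k:ℝ)^2) := by ring
          rw [heq, div_le_div_iff₀ hkpos (by norm_num : (0:ℝ) < 64)]
          have hmul := mul_le_mul_of_nonneg_right this hnbar0.le
          nlinarith [hmul]
  -- Chebyshev
  set FA := (univ : Finset (Fin N)).powerset.filter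
    (fun S => nbar/16 ≤ |(S.card:ℝ) - N*p|) with hFA_def
  have hFAsum : ∑ S ∈ FA, wt N p S ≤ 1/8 := by
    have hSig0 : (0:ℝ) ≤ ∑ S ∈ FA, wt N p S := Finset.sum_nonneg fun S _ => hwt0 S
    have hstep : (∑ S ∈ FA, wt N p S) * (nbar/16)^2 ≤ nbar := by
      rw [Finset.sum_mul]
      calc ∑ S ∈ FA, wt N p S * (nbar/16)^2
          ≤ ∑ S ∈ FA, wt N p S * ((S.card:ℝ) - N*p)^2 := by
            refine Finset.sum_le_sum fun S hS => ?_
            refine mul_le_mul_of_nonneg_left ?_ (hwt0 S)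
            have habs : nbar/16 ≤ |(S.card:ℝ) - N*p| := by
              rw [hFA_def] at hS
              exact (Finset.mem_filter.mp hS).2
            calc (nbar/16)^2 ≤ |(S.card:ℝ) - N*p|^2 := by
                  apply pow_le_pow_left₀ (by positivity) habs
              _ = ((S.card:ℝ) - N*p)^2 := sq_abs _
        _ ≤ ∑ S ∈ (univ : Finset (Fin N)).powerset, wt N p S * ((S.card:ℝ) - N*p)^2 := by
            apply Finset.sum_le_sum_of_subset_of_nonneg (Finset.filter_subset _ _)
            intro S _ _
            exact mul_nonneg (hwt0 S) (sq_nonneg _)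
        _ = N * p * (1 - p) := sum_wt_var N p
        _ ≤ nbar := by rw [hNp]; nlinarith [mul_nonneg hnbar0.le hp0.le, hnbar0]
    have h2 : (∑ S ∈ FA, wt N p S) * nbar * nbar ≤ 256 * nbar := by
      calc (∑ S ∈ FA, wt N p S) * nbar * nbar
          = ((∑ S ∈ FA, wt N p S) * (nbar/16)^2) * 256 := by ring
        _ ≤ nbar * 256 := by linarith
        _ = 256 * nbar := by ring
    have h3 : (∑ S ∈ FA, wt N p S) * nbar ≤ 256 :=
      le_of_mul_le_mul_right (by linarith) hnbar0
    have h4 : (∑ S ∈ FA, wt N p S) * 2048 ≤ (∑ S ∈ FA, wt N p S) * nbar :=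
      mul_le_mul_of_nonneg_left hnbar.le hSig0
    linarith
  -- Markov
  set FB := (univ : Finset (Fin N)).powerset.filter (fun S => nbar/16 < Y S) with hFB_def
  have hFBsum : ∑ S ∈ FB, wt N p S ≤ 1/4 := by
    have hSig0 : (0:ℝ) ≤ ∑ S ∈ FB, wt N p S := Finset.sum_nonneg fun S _ => hwt0 S
    have hstep : (∑ S ∈ FB, wt N p S) * (nbar/16) ≤ nbar/64 := by
      rw [Finset.sum_mul]
      calc ∑ S ∈ FB, wt N p S * (nbar/16)
          ≤ ∑ S ∈ FB, wt N p S * Y S := by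
            refine Finset.sum_le_sum fun S hS => ?_
            refine mul_le_mul_of_nonneg_left ?_ (hwt0 S)
            rw [hFB_def] at hS
            exact ((Finset.mem_filter.mp hS).2).le
        _ ≤ ∑ S ∈ (univ : Finset (Fin N)).powerset, wt N p S * Y S := by
            apply Finset.sum_le_sum_of_subset_of_nonneg (Finset.filter_subset _ _)
            intro S _ _
            exact mul_nonneg (hwt0 S) (hY0 S)
        _ ≤ nbar / 64 := hEY
    have h3 : (∑ S ∈ FB, wt N p S) * (nbar/16) ≤ (1/4) * (nbar/16) := by linarith
    exact le_of_mul_le_mul_right h3 (by positivity)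
  -- existence of a good S
  have hex : ∃ S ∈ (univ : Finset (Fin N)).powerset, S ∉ FA ∧ S ∉ FB := by
    by_contra hcon
    push_neg at hcon
    have hsub : (univ : Finset (Fin N)).powerset ⊆ FA ∪ FB := by
      intro S hS
      rcases em (S ∈ FA) with h | h
      · exact Finset.mem_union_left _ h
      · exact Finset.mem_union_right _ (hcon S hS h)
    have h1 : (1:ℝ) ≤ ∑ S ∈ FA ∪ FB, wt N p S := by
      rw [← sum_wt_one N p]
      exact Finset.sum_le_sum_of_subset_of_nonneg hsub fun S _ _ => hwt0 S
    have h2 : ∑ S ∈ FA ∪ FB, wt N p S ≤ (∑ S ∈ FA, wt N p S) + ∑ S ∈ FB, wt N p S := by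
      have h3 := Finset.sum_union_inter (s₁ := FA) (s₂ := FB) (f := wt N p)
      have h4 : (0:ℝ) ≤ ∑ S ∈ FA ∩ FB, wt N p S := Finset.sum_nonneg fun S _ => hwt0 S
      linarith
    linarith
  obtain ⟨S, hSmem, hSA, hSB⟩ := hex
  have hA : |(S.card:ℝ) - N*p| < nbar/16 := by
    by_contra h
    exact hSA (by rw [hFA_def]; exact Finset.mem_filter.mpr ⟨hSmem, not_lt.mp h⟩)
  have hBY : Y S ≤ nbar/16 := by
    by_contra h
    exact hSB (by rw [hFB_def]; exact Finset.mem_filter.mpr ⟨hSmem, not_le.mp h⟩)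
  obtain ⟨hA1, hA2⟩ := abs_lt.mp hA
  -- bad vertices
  set Bv := S.filter (fun v => ∃ i, 2 ≤ i ∧ i ≤ k ∧
    D i < ((E.filter fun e => e ⊆ S ∧ e.card = i ∧ v ∈ e).card : ℝ)) with hBv_def
  have hfil : ∀ i : ℕ, (Ei i).filter (fun e => e ⊆ S)
      = E.filter (fun e => e ⊆ S ∧ e.card = i) := by
    intro i
    simp only [hEi_def, Finset.filter_filter]
    apply Finset.filter_congr
    intro e _
    tauto
  have hid : ∀ i : ℕ, ∑ v ∈ S, ((E.filter fun e => e ⊆ S ∧ e.card = i ∧ v ∈ e).card : ℝ)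
      = (i:ℝ) * (((Ei i).filter (fun e => e ⊆ S)).card : ℝ) := by
    intro i
    have hv : ∀ v ∈ S, ((E.filter fun e => e ⊆ S ∧ e.card = i ∧ v ∈ e).card : ℝ)
        = ∑ e ∈ E, (if e ⊆ S ∧ e.card = i ∧ v ∈ e then (1:ℝ) else 0) := by
      intro v _
      rw [Finset.sum_boole]
    rw [Finset.sum_congr rfl hv, Finset.sum_comm]
    have he : ∀ e ∈ E, (∑ v ∈ S, if e ⊆ S ∧ e.card = i ∧ v ∈ e then (1:ℝ) else 0)
        = if e ⊆ S ∧ e.card = i then (i:ℝ) else 0 := by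
      intro e _
      by_cases h : e ⊆ S ∧ e.card = i
      · rw [if_pos h]
        have hvv : ∀ v ∈ S, (if e ⊆ S ∧ e.card = i ∧ v ∈ e then (1:ℝ) else 0)
            = if v ∈ e then 1 else 0 := by
          intro v _
          by_cases hv' : v ∈ e <;> simp [h.1, h.2, hv']
        rw [Finset.sum_congr rfl hvv, Finset.sum_boole]
        have hse : S.filter (fun v => v ∈ e) = e := by
          ext x
          simp only [Finset.mem_filter]
          exact ⟨fun hx => hx.2, fun hx => ⟨h.1 hx, hx⟩⟩
        rw [hse, h.2]
      · rw [if_neg h]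
        apply Finset.sum_eq_zero
        intro v _
        rw [if_neg]
        intro hcon
        exact h ⟨hcon.1, hcon.2.1⟩
    rw [Finset.sum_congr rfl he, Finset.sum_ite, Finset.sum_const, Finset.sum_const_zero,
      add_zero, nsmul_eq_mul, hfil i]
    ring
  -- bad set is small
  have hBvY : ((Bv.card:ℝ)) ≤ Y S := by
    have step1 : (Bv.card:ℝ) ≤ ∑ i ∈ Icc 2 k,
        ((S.filter (fun v => D i <
          ((E.filter fun e => e ⊆ S ∧ e.card = i ∧ v ∈ e).card : ℝ))).card : ℝ) := by
      have hvv : ∀ v ∈ Bv, (1:ℝ) ≤ ∑ i ∈ Icc 2 k,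
          (if D i < ((E.filter fun e => e ⊆ S ∧ e.card = i ∧ v ∈ e).card : ℝ)
            then (1:ℝ) else 0) := by
        intro v hv
        rw [hBv_def] at hv
        obtain ⟨hvS, i0, h2', hik', hlt⟩ := Finset.mem_filter.mp hv
        have hi0 : i0 ∈ Icc 2 k := Finset.mem_Icc.mpr ⟨h2', hik'⟩
        calc (1:ℝ) = if D i0 < ((E.filter fun e => e ⊆ S ∧ e.card = i0 ∧ v ∈ e).card : ℝ)
              then (1:ℝ) else 0 := by rw [if_pos hlt]
          _ ≤ _ := Finset.single_le_sum (f := fun i =>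
              if D i < ((E.filter fun e => e ⊆ S ∧ e.card = i ∧ v ∈ e).card : ℝ)
                then (1:ℝ) else 0)
              (fun i _ => by positivity) hi0
      calc (Bv.card:ℝ) = ∑ v ∈ Bv, (1:ℝ) := by simp
        _ ≤ ∑ v ∈ Bv, ∑ i ∈ Icc 2 k,
            (if D i < ((E.filter fun e => e ⊆ S ∧ e.card = i ∧ v ∈ e).card : ℝ)
              then (1:ℝ) else 0) := Finset.sum_le_sum hvv
        _ ≤ ∑ v ∈ S, ∑ i ∈ Icc 2 k,
            (if D i < ((E.filter fun e => e ⊆ S ∧ e.card = i ∧ v ∈ e).card : ℝ)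
              then (1:ℝ) else 0) := by
            apply Finset.sum_le_sum_of_subset_of_nonneg (Finset.filter_subset _ _)
            intro v _ _
            apply Finset.sum_nonneg
            intro i _
            positivity
        _ = ∑ i ∈ Icc 2 k, ∑ v ∈ S,
            (if D i < ((E.filter fun e => e ⊆ S ∧ e.card = i ∧ v ∈ e).card : ℝ)
              then (1:ℝ) else 0) := Finset.sum_comm
        _ = ∑ i ∈ Icc 2 k,
            ((S.filter (fun v => D i <
              ((E.filter fun e => e ⊆ S ∧ e.card = i ∧ v ∈ e).card : ℝ))).card : ℝ) := by
            refine Finset.sum_congr rfl fun i _ => ?_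
            rw [Finset.sum_boole]
    have step2 : ∀ i ∈ Icc 2 k,
        ((S.filter (fun v => D i <
          ((E.filter fun e => e ⊆ S ∧ e.card = i ∧ v ∈ e).card : ℝ))).card : ℝ)
        ≤ ((i:ℝ) * (((Ei i).filter (fun e => e ⊆ S)).card : ℝ))/D i := by
      intro i hi
      obtain ⟨h2, hik⟩ := Finset.mem_Icc.mp hi
      have hDpos := hD0 i h2 hik
      rw [le_div_iff₀ hDpos]
      calc ((S.filter (fun v => D i <
            ((E.filter fun e => e ⊆ S ∧ e.card = i ∧ v ∈ e).card : ℝ))).card : ℝ) * D i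
          = ∑ v ∈ S.filter (fun v => D i <
              ((E.filter fun e => e ⊆ S ∧ e.card = i ∧ v ∈ e).card : ℝ)), D i := by
            rw [Finset.sum_const, nsmul_eq_mul]
        _ ≤ ∑ v ∈ S.filter (fun v => D i <
              ((E.filter fun e => e ⊆ S ∧ e.card = i ∧ v ∈ e).card : ℝ)),
              ((E.filter fun e => e ⊆ S ∧ e.card = i ∧ v ∈ e).card : ℝ) := by
            refine Finset.sum_le_sum fun v hv => ?_
            exact ((Finset.mem_filter.mp hv).2).le
        _ ≤ ∑ v ∈ S, ((E.filter fun e => e ⊆ S ∧ e.card = i ∧ v ∈ e).card : ℝ) := by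
            apply Finset.sum_le_sum_of_subset_of_nonneg (Finset.filter_subset _ _)
            intro v _ _
            positivity
        _ = (i:ℝ) * (((Ei i).filter (fun e => e ⊆ S)).card : ℝ) := hid i
    calc (Bv.card:ℝ) ≤ _ := step1
      _ ≤ ∑ i ∈ Icc 2 k, ((i:ℝ) * (((Ei i).filter (fun e => e ⊆ S)).card : ℝ))/D i :=
          Finset.sum_le_sum step2
      _ = Y S := by rw [hY_def]
  -- conclude
  have hBvS : Bv ⊆ S := Finset.filter_subset _ _
  have hVcard : (((S \ Bv).card : ℕ) : ℝ) = (S.card : ℝ) - (Bv.card : ℝ) := by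
    rw [Finset.card_sdiff_of_subset hBvS, Nat.cast_sub (Finset.card_le_card hBvS)]
  refine ⟨S \ Bv, ⟨?_, ?_⟩, ?_⟩
  · rw [hVcard]
    have : (7:ℝ)/8 * nbar - nbar/16 < S.card := by rw [← hNp]; linarith
    linarith [hBvY, hBY]
  · have hle : ((S \ Bv).card : ℝ) ≤ (S.card : ℝ) := by
      exact_mod_cast Finset.card_le_card (Finset.sdiff_subset)
    have : (S.card : ℝ) < 7/8 * nbar + nbar/16 := by rw [← hNp]; linarith
    linarith [hnbar0]
  · intro v hv i h2 hik
    have hvS : v ∈ S := (Finset.mem_sdiff.mp hv).1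
    have hvB : v ∉ Bv := (Finset.mem_sdiff.mp hv).2
    have hnb : ((E.filter fun e => e ⊆ S ∧ e.card = i ∧ v ∈ e).card : ℝ) ≤ D i := by
      by_contra h
      apply hvB
      rw [hBv_def]
      refine Finset.mem_filter.mpr ⟨hvS, ⟨i, h2, hik, not_le.mp h⟩⟩
    have hmono : (E.filter fun e => e ⊆ S \ Bv ∧ e.card = i ∧ v ∈ e)
        ⊆ (E.filter fun e => e ⊆ S ∧ e.card = i ∧ v ∈ e) := by
      intro e he
      rw [Finset.mem_filter] at he ⊢
      exact ⟨he.1, he.2.1.trans Finset.sdiff_subset, he.2.2⟩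
    have hfinal : ((E.filter fun e => e ⊆ S \ Bv ∧ e.card = i ∧ v ∈ e).card : ℝ) ≤ D i := by
      calc ((E.filter fun e => e ⊆ S \ Bv ∧ e.card = i ∧ v ∈ e).card : ℝ)
          ≤ ((E.filter fun e => e ⊆ S ∧ e.card = i ∧ v ∈ e).card : ℝ) := by
            exact_mod_cast Finset.card_le_card hmono
        _ ≤ D i := hnb
    simpa [hD_def] using hfinal
end

section
/- Let k ≥ 2 be an integer, let T ≥ e and N ≥ 1 be reals, and let c_2, …, c_k > 0. Let H = (V, E_2 ∪ … ∪ E_k) be a linear hypergraph with |V| ≤ N such that for every vertex v ∈ V and every i ∈ {2, …, k}, the number d_i(v) of size-i edges containing v satisfies d_i(v) ≤ k·c_i·T^{i−1}·(ln T)^{(k−i)/(k−1)}. Then for all integers 2 ≤ g ≤ h ≤ i ≤ k, the number of 3-cycles {E_1, E_2, E_3} in H with |E_1| = g, |E_2| = h, |E_3| = i is less than N·k^4·c_g·c_h·T^{g+h−2}·(ln T)^2. -/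
/-- A hypergraph is linear if it has no 2-cycles. -/
def Linear {V : Type*} [DecidableEq V] (E : Finset (Finset V)) : Prop :=
  ¬ HasCycle E 2

/-- Three pairwise distinct edges forming a 3-cycle: there are pairwise distinct vertices
`v₁ ∈ e₁ ∩ e₂`, `v₂ ∈ e₂ ∩ e₃`, `v₃ ∈ e₃ ∩ e₁`. -/
def IsCycle3 {V : Type*} [DecidableEq V] (e₁ e₂ e₃ : Finset V) : Prop :=
  e₁ ≠ e₂ ∧ e₁ ≠ e₃ ∧ e₂ ≠ e₃ ∧
  ∃ v₁ v₂ v₃ : V, v₁ ≠ v₂ ∧ v₁ ≠ v₃ ∧ v₂ ≠ v₃ ∧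
    v₁ ∈ e₁ ∩ e₂ ∧ v₂ ∈ e₂ ∩ e₃ ∧ v₃ ∈ e₃ ∩ e₁


/-! A 3-cycle `{e₁, e₂, e₃}` with `v₁ ∈ e₁ ∩ e₂`, `v₂ ∈ e₂ ∩ e₃`, `v₃ ∈ e₃ ∩ e₁` is determined by
the code `⟨v₁, (e₁, e₂), (v₃, v₂)⟩`, because in a linear hypergraph `e₃` is the only edge through
`v₃` and `v₂`. With `|e₁| = g`, `|e₂| = h` there are at most `∑ᵥ d_g(v) d_h(v) (g-1)(h-1)` codes,
which the degree bounds `Δᵢ` turn into `N Δ_g Δ_h (k-1)²`. The powers of `log T` in `Δ_g Δ_h`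
add up to `(2k-g-h)/(k-1) ≤ 2`, and `k²(k-1)² < k⁴` makes the final inequality strict. -/

open Finset

section Hypergraph

variable {α : Type*} [DecidableEq α]

theorem Linear.eq_of_mem_of_mem {E : Finset (Finset α)} (hlin : Linear E) {e e' : Finset α}
    (he : e ∈ E) (he' : e' ∈ E) {u w : α} (huw : u ≠ w)
    (hue : u ∈ e) (hwe : w ∈ e) (hue' : u ∈ e') (hwe' : w ∈ e') : e = e' := by
  by_contra hne
  refine hlin ⟨![e, e'], ![u, w], ?_, ?_, ?_, ?_⟩
  · exact Fin.cons_injective_iff.2 ⟨by simpa using hne, Function.injective_of_subsingleton _⟩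
  · exact Fin.cons_injective_iff.2 ⟨by simpa using huw, Function.injective_of_subsingleton _⟩
  · intro a
    fin_cases a <;> simp [he, he']
  · intro a
    fin_cases a
    · exact ⟨hue, hue'⟩
    · exact ⟨hwe', hwe⟩

theorem Linear.filter_mem_and_mem_eq_singleton {E : Finset (Finset α)} (hlin : Linear E)
    {e : Finset α} (he : e ∈ E) {u w : α} (huw : u ≠ w) (hue : u ∈ e) (hwe : w ∈ e) :
    E.filter (fun e' => u ∈ e' ∧ w ∈ e') = {e} := by
  ext e'
  simp only [mem_filter, mem_singleton]
  constructor
  · rintro ⟨he', hue', hwe'⟩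
    exact hlin.eq_of_mem_of_mem he' he huw hue' hwe' hue hwe
  · rintro rfl
    exact ⟨he, hue, hwe⟩

def degreeOfSize (E : Finset (Finset α)) (i : ℕ) (v : α) : ℕ :=
  #(E.filter fun e => e.card = i ∧ v ∈ e)

def cycle3Codes (V : Finset α) (E : Finset (Finset α)) (g h : ℕ) :
    Finset (Σ _ : α, Σ _ : Finset α × Finset α, α × α) :=
  V.sigma fun v => ((E.filter fun e => e.card = g ∧ v ∈ e) ×ˢ
    (E.filter fun e => e.card = h ∧ v ∈ e)).sigma fun p => p.1.erase v ×ˢ p.2.erase v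

def decodeCycle3 (E : Finset (Finset α)) (c : Σ _ : α, Σ _ : Finset α × Finset α, α × α) :
    Finset (Finset α) :=
  insert c.2.1.1 (insert c.2.1.2 (E.filter fun e => c.2.2.1 ∈ e ∧ c.2.2.2 ∈ e))

theorem card_cycle3Codes (V : Finset α) (E : Finset (Finset α)) (g h : ℕ) :
    #(cycle3Codes V E g h) =
      ∑ v ∈ V, degreeOfSize E g v * degreeOfSize E h v * ((g - 1) * (h - 1)) := by
  rw [cycle3Codes, card_sigma]
  refine sum_congr rfl fun v _ => ?_
  rw [card_sigma, degreeOfSize, degreeOfSize, ← card_product, ← smul_eq_mul, ← sum_const]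
  refine sum_congr rfl fun p hp => ?_
  simp only [mem_product, mem_filter] at hp
  rw [card_product, card_erase_of_mem hp.1.2.2, card_erase_of_mem hp.2.2.2, hp.1.2.1, hp.2.2.1]

theorem ncard_cycle3_le_sum_degreeOfSize {V : Finset α} {E : Finset (Finset α)}
    (hEV : ∀ e ∈ E, e ⊆ V) (hlin : Linear E) (g h : ℕ) (p : Finset α → Prop) :
    Set.ncard {s : Finset (Finset α) | ∃ e₁ e₂ e₃ : Finset α,
        s = {e₁, e₂, e₃} ∧ e₁ ∈ E ∧ e₂ ∈ E ∧ e₃ ∈ E ∧ IsCycle3 e₁ e₂ e₃ ∧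
        e₁.card = g ∧ e₂.card = h ∧ p e₃} ≤
      ∑ v ∈ V, degreeOfSize E g v * degreeOfSize E h v * ((g - 1) * (h - 1)) := by
  rw [← card_cycle3Codes, ← Set.ncard_coe_finset]
  refine (Set.ncard_le_ncard ?_ (Set.toFinite _)).trans
    (Set.ncard_image_le (f := decodeCycle3 E) (finite_toSet _))
  rintro _ ⟨e₁, e₂, e₃, rfl, he₁, he₂, he₃, ⟨-, -, -, v₁, v₂, v₃, hv₁₂, hv₁₃, hv₂₃, hv₁, hv₂, hv₃⟩,
    hg, hh, -⟩
  rw [mem_inter] at hv₁ hv₂ hv₃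
  refine ⟨⟨v₁, (e₁, e₂), (v₃, v₂)⟩, ?_, ?_⟩
  · simp only [cycle3Codes, coe_sigma, Set.mem_sigma_iff, mem_coe, mem_product, mem_filter,
      mem_erase]
    exact ⟨hEV e₁ he₁ hv₁.1, ⟨⟨he₁, hg, hv₁.1⟩, he₂, hh, hv₁.2⟩, ⟨hv₁₃.symm, hv₃.2⟩,
      hv₁₂.symm, hv₂.1⟩
  · simp only [decodeCycle3, hlin.filter_mem_and_mem_eq_singleton he₃ hv₂₃.symm hv₃.1 hv₂.2]

theorem sum_degreeOfSize_mul_le {V : Finset α} {E : Finset (Finset α)} {g h k : ℕ} {A B : ℝ}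
    (hk : 1 ≤ k) (hgk : g ≤ k) (hhk : h ≤ k) (hA : ∀ v ∈ V, (degreeOfSize E g v : ℝ) ≤ A)
    (hB : ∀ v ∈ V, (degreeOfSize E h v : ℝ) ≤ B) :
    ((∑ v ∈ V, degreeOfSize E g v * degreeOfSize E h v * ((g - 1) * (h - 1)) : ℕ) : ℝ) ≤
      #V * (A * B * ((k : ℝ) - 1) ^ 2) := by
  rw [← nsmul_eq_mul, ← sum_const, ← Nat.cast_pred hk]
  push_cast
  refine sum_le_sum fun v hv => ?_
  have hAv := hA v hv
  have hBv := hB v hv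
  have hA₀ : 0 ≤ A := (Nat.cast_nonneg _).trans hAv
  have hB₀ : 0 ≤ B := (Nat.cast_nonneg _).trans hBv
  rw [sq]
  gcongr

end Hypergraph

noncomputable def degreeBound (k : ℕ) (c : ℕ → ℝ) (T : ℝ) (i : ℕ) : ℝ :=
  k * c i * T ^ (i - 1) * Real.log T ^ (((k : ℝ) - i) / ((k : ℝ) - 1))

section degreeBound

variable {k : ℕ} {c : ℕ → ℝ} {T : ℝ}

theorem degreeBound_pos {i : ℕ} (hk : 1 ≤ k) (hT : 1 < T) (hc : 0 < c i) :
    0 < degreeBound k c T i := by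
  have : 0 < Real.log T := Real.log_pos hT
  unfold degreeBound
  have : (0 : ℝ) < k := by exact_mod_cast hk
  positivity

theorem degreeBound_mul_degreeBound_lt {g h : ℕ} (hk : 2 ≤ k) (hg : 1 ≤ g) (hh : 1 ≤ h)
    (hT : Real.exp 1 ≤ T) (hcg : 0 < c g) (hch : 0 < c h) :
    degreeBound k c T g * degreeBound k c T h * ((k : ℝ) - 1) ^ 2 <
      (k : ℝ) ^ 4 * c g * c h * T ^ (g + h - 2) * Real.log T ^ 2 := by
  have hT₀ : 0 < T := (Real.exp_pos 1).trans_le hT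
  have hL : 1 ≤ Real.log T := (Real.le_log_iff_exp_le hT₀).2 hT
  have hk' : (2 : ℝ) ≤ k := by exact_mod_cast hk
  have hT_pow : T ^ (g - 1) * T ^ (h - 1) = T ^ (g + h - 2) := by
    rw [← pow_add]; congr 1; omega
  have hL_pow : Real.log T ^ (((k : ℝ) - g) / ((k : ℝ) - 1)) *
      Real.log T ^ (((k : ℝ) - h) / ((k : ℝ) - 1)) ≤ Real.log T ^ 2 := by
    rw [← Real.rpow_add (by linarith), ← Real.rpow_two]
    refine Real.rpow_le_rpow_of_exponent_le hL ?_
    rw [← add_div, div_le_iff₀ (by linarith)]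
    have : (2 : ℝ) ≤ g + h := by exact_mod_cast (by omega : 2 ≤ g + h)
    linarith
  have hk_pow : (k : ℝ) ^ 2 * ((k : ℝ) - 1) ^ 2 < (k : ℝ) ^ 4 := by nlinarith
  calc _ = (k : ℝ) ^ 2 * ((k : ℝ) - 1) ^ 2 * c g * c h * T ^ (g + h - 2) *
        (Real.log T ^ (((k : ℝ) - g) / ((k : ℝ) - 1)) *
          Real.log T ^ (((k : ℝ) - h) / ((k : ℝ) - 1))) := by
        rw [degreeBound, degreeBound, ← hT_pow]; ring
    _ ≤ (k : ℝ) ^ 2 * ((k : ℝ) - 1) ^ 2 * c g * c h * T ^ (g + h - 2) * Real.log T ^ 2 := by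
        gcongr
    _ < (k : ℝ) ^ 4 * c g * c h * T ^ (g + h - 2) * Real.log T ^ 2 := by
        gcongr

end degreeBound

theorem stmt14_general {α : Type*} [DecidableEq α] (k : ℕ) (hk : 2 ≤ k) (T N : ℝ)
    (hT : Real.exp 1 ≤ T) (hN : 1 ≤ N)
    (c : ℕ → ℝ) (hc : ∀ i : ℕ, 2 ≤ i → i ≤ k → 0 < c i)
    (V : Finset α) (hVN : (V.card : ℝ) ≤ N)
    (E : Finset (Finset α)) (hEV : ∀ e ∈ E, e ⊆ V)
    (hlin : Linear E)
    (hdeg : ∀ v ∈ V, ∀ i : ℕ, 2 ≤ i → i ≤ k →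
      ((E.filter fun e => e.card = i ∧ v ∈ e).card : ℝ) ≤
        (k : ℝ) * c i * T ^ (i - 1) * Real.log T ^ (((k : ℝ) - i) / ((k : ℝ) - 1)))
    (g h i : ℕ) (hg : 2 ≤ g) (hgh : g ≤ h) (hhi : h ≤ i) (hik : i ≤ k) :
    (Set.ncard {s : Finset (Finset α) | ∃ e₁ e₂ e₃ : Finset α,
        s = {e₁, e₂, e₃} ∧ e₁ ∈ E ∧ e₂ ∈ E ∧ e₃ ∈ E ∧ IsCycle3 e₁ e₂ e₃ ∧
        e₁.card = g ∧ e₂.card = h ∧ e₃.card = i} : ℝ) <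
      N * (k : ℝ) ^ 4 * c g * c h * T ^ (g + h - 2) * Real.log T ^ 2 := by
  have hgk : g ≤ k := by omega
  have hhk : h ≤ k := by omega
  have hcg : 0 < c g := hc g hg hgk
  have hch : 0 < c h := hc h (by omega) hhk
  have hT₁ : 1 < T := (Real.one_lt_exp_iff.2 one_pos).trans_le hT
  have hDg : 0 < degreeBound k c T g := degreeBound_pos (by omega) hT₁ hcg
  have hDh : 0 < degreeBound k c T h := degreeBound_pos (by omega) hT₁ hch
  calc _ ≤ ((∑ v ∈ V, degreeOfSize E g v * degreeOfSize E h v * ((g - 1) * (h - 1)) : ℕ) : ℝ) := by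
        exact_mod_cast ncard_cycle3_le_sum_degreeOfSize hEV hlin g h _
    _ ≤ #V * (degreeBound k c T g * degreeBound k c T h * ((k : ℝ) - 1) ^ 2) :=
        sum_degreeOfSize_mul_le (by omega) hgk hhk (fun v hv => hdeg v hv g hg hgk)
          (fun v hv => hdeg v hv h (by omega) hhk)
    _ ≤ N * (degreeBound k c T g * degreeBound k c T h * ((k : ℝ) - 1) ^ 2) := by
        gcongr
    _ < N * ((k : ℝ) ^ 4 * c g * c h * T ^ (g + h - 2) * Real.log T ^ 2) :=
        mul_lt_mul_of_pos_left (degreeBound_mul_degreeBound_lt hk (by omega) (by omega) hT hcg hch)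
          (by linarith)
    _ = _ := by ring

/-- Counting 3-cycles with prescribed edge sizes in a linear hypergraph with bounded
degrees. -/
theorem stmt14 {α : Type*} [DecidableEq α] (k : ℕ) (hk : 2 ≤ k) (T N : ℝ)
    (hT : Real.exp 1 ≤ T) (hN : 1 ≤ N)
    (c : ℕ → ℝ) (hc : ∀ i : ℕ, 2 ≤ i → i ≤ k → 0 < c i)
    (V : Finset α) (hVN : (V.card : ℝ) ≤ N)
    (E : Finset (Finset α)) (hEV : ∀ e ∈ E, e ⊆ V)
    (hE : ∀ e ∈ E, 2 ≤ e.card ∧ e.card ≤ k)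
    (hlin : Linear E)
    (hdeg : ∀ v ∈ V, ∀ i : ℕ, 2 ≤ i → i ≤ k →
      ((E.filter fun e => e.card = i ∧ v ∈ e).card : ℝ) ≤
        (k : ℝ) * c i * T ^ (i - 1) * Real.log T ^ (((k : ℝ) - i) / ((k : ℝ) - 1)))
    (g h i : ℕ) (hg : 2 ≤ g) (hgh : g ≤ h) (hhi : h ≤ i) (hik : i ≤ k) :
    (Set.ncard {s : Finset (Finset α) | ∃ e₁ e₂ e₃ : Finset α,
        s = {e₁, e₂, e₃} ∧ e₁ ∈ E ∧ e₂ ∈ E ∧ e₃ ∈ E ∧ IsCycle3 e₁ e₂ e₃ ∧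
        e₁.card = g ∧ e₂.card = h ∧ e₃.card = i} : ℝ) <
      N * (k : ℝ) ^ 4 * c g * c h * T ^ (g + h - 2) * Real.log T ^ 2 :=
  stmt14_general k hk T N hT hN c hc V hVN E hEV hlin hdeg g h i hg hgh hhi hik
end

section
/- Let k ≥ 1 and let n, u, x, t be positive integers with k·u ≤ n. Let V be an n-element set, let X ⊆ V with |X| = x, and let M be a k-matching of size u on V chosen uniformly at random. Then Pr[|M ∩ [X]^k| ≥ t] ≤ C(u, t)·C(x, k·t)/C(n, k·t) ≤ (u·x^k/n^k)^t. -/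
/-- The finset of all `k`-matchings of size `u` on the vertex set `V`: families of `u`
pairwise disjoint `k`-element subsets of `V`. -/
def matchingsOn {α : Type*} [DecidableEq α] (k u : ℕ) (V : Finset α) :
    Finset (Finset (Finset α)) :=
  V.powerset.powerset.filter fun M =>
    M.card = u ∧ (∀ e ∈ M, e.card = k) ∧ ∀ e₁ ∈ M, ∀ e₂ ∈ M, e₁ ≠ e₂ → Disjoint e₁ e₂

section Aux
variable {α : Type*} {β : Type*} [DecidableEq α] [DecidableEq β]

lemma mem_matchingsOn {k u : ℕ} {V : Finset α} {M : Finset (Finset α)} :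
    M ∈ matchingsOn k u V ↔ (∀ e ∈ M, e ⊆ V) ∧ M.card = u ∧ (∀ e ∈ M, e.card = k) ∧
      (∀ e₁ ∈ M, ∀ e₂ ∈ M, e₁ ≠ e₂ → Disjoint e₁ e₂) := by
  simp only [matchingsOn, Finset.mem_filter, Finset.mem_powerset, and_assoc]
  constructor
  · rintro ⟨h, h2⟩
    exact ⟨fun e he => Finset.mem_powerset.mp (h he), h2⟩
  · rintro ⟨h, h2⟩
    exact ⟨fun e he => Finset.mem_powerset.mpr (h e he), h2⟩

lemma matchingsOn_mono {k u : ℕ} {V W : Finset α} (h : V ⊆ W) :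
    matchingsOn k u V ⊆ matchingsOn k u W := by
  intro M hM
  rw [mem_matchingsOn] at hM ⊢
  exact ⟨fun e he => (hM.1 e he).trans h, hM.2⟩

lemma supp_card {k t : ℕ} {S : Finset α} {T : Finset (Finset α)}
    (hT : T ∈ matchingsOn k t S) : (T.biUnion id).card = k * t := by
  rw [mem_matchingsOn] at hT
  rw [show (T.biUnion id) = T.biUnion (fun e => e) from rfl,
    Finset.card_biUnion (fun e he f hf hef => hT.2.2.2 e he f hf hef)]
  rw [Finset.sum_congr rfl (fun e he => hT.2.2.1 e he), Finset.sum_const, hT.2.1,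
    smul_eq_mul, mul_comm]

lemma supp_subset {k t : ℕ} {S : Finset α} {T : Finset (Finset α)}
    (hT : T ∈ matchingsOn k t S) : T.biUnion id ⊆ S := by
  rw [mem_matchingsOn] at hT
  exact Finset.biUnion_subset.mpr (fun e he => hT.1 e he)

end Aux

section Transfer
variable {α : Type*} {β : Type*} [DecidableEq α] [DecidableEq β]

lemma image_mem_matchingsOn {k u : ℕ} {S : Finset α} {S' : Finset β}
    (F : Finset α → Finset β)
    (hsub : ∀ A ⊆ S, F A ⊆ S') (hcard : ∀ A ⊆ S, (F A).card = A.card)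
    (hdisj : ∀ A ⊆ S, ∀ B ⊆ S, Disjoint A B → Disjoint (F A) (F B))
    (hinj : ∀ A ⊆ S, ∀ B ⊆ S, F A = F B → A = B)
    {M : Finset (Finset α)} (hM : M ∈ matchingsOn k u S) :
    M.image F ∈ matchingsOn k u S' := by
  rw [mem_matchingsOn] at hM ⊢
  obtain ⟨h1, h2, h3, h4⟩ := hM
  refine ⟨?_, ?_, ?_, ?_⟩
  · rintro f hf
    obtain ⟨e, he, rfl⟩ := Finset.mem_image.mp hf
    exact hsub e (h1 e he)
  · rw [Finset.card_image_of_injOn (fun A hA B hB hFAB => hinj A (h1 A hA) B (h1 B hB) hFAB), h2]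
  · rintro f hf
    obtain ⟨e, he, rfl⟩ := Finset.mem_image.mp hf
    rw [hcard e (h1 e he)]; exact h3 e he
  · rintro f₁ hf₁ f₂ hf₂ hne
    obtain ⟨e₁, he₁, rfl⟩ := Finset.mem_image.mp hf₁
    obtain ⟨e₂, he₂, rfl⟩ := Finset.mem_image.mp hf₂
    exact hdisj e₁ (h1 e₁ he₁) e₂ (h1 e₂ he₂)
      (h4 e₁ he₁ e₂ he₂ (fun h => hne (h ▸ rfl)))

lemma matchingsOn_card_congr (k u : ℕ) {S : Finset α} {S' : Finset β}
    (h : S.card = S'.card) :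
    (matchingsOn k u S).card = (matchingsOn k u S').card := by
  classical
  let e := Finset.equivOfCardEq h
  let F : Finset α → Finset β := fun A =>
    ((A.subtype (· ∈ S)).map e.toEmbedding).map (Function.Embedding.subtype _)
  let G : Finset β → Finset α := fun B =>
    ((B.subtype (· ∈ S')).map e.symm.toEmbedding).map (Function.Embedding.subtype _)
  have hmemF : ∀ (A : Finset α) (b : β), b ∈ F A ↔ ∃ a : {x // x ∈ S}, ↑a ∈ A ∧ ↑(e a) = b := by
    intro A b
    simp only [F, Finset.mem_map, Finset.mem_subtype, Function.Embedding.coe_subtype,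
      Equiv.coe_toEmbedding]
    constructor
    · rintro ⟨y, ⟨a, ha, rfl⟩, rfl⟩
      exact ⟨a, ha, rfl⟩
    · rintro ⟨a, ha, hb⟩
      exact ⟨e a, ⟨a, ha, rfl⟩, hb⟩
  have hmemG : ∀ (B : Finset β) (a : α), a ∈ G B ↔ ∃ b : {x // x ∈ S'}, ↑b ∈ B ∧ ↑(e.symm b) = a := by
    intro B a
    simp only [G, Finset.mem_map, Finset.mem_subtype, Function.Embedding.coe_subtype,
      Equiv.coe_toEmbedding]
    constructor
    · rintro ⟨y, ⟨b, hb, rfl⟩, rfl⟩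
      exact ⟨b, hb, rfl⟩
    · rintro ⟨b, hb, ha⟩
      exact ⟨e.symm b, ⟨b, hb, rfl⟩, ha⟩
  have hGF : ∀ A ⊆ S, G (F A) = A := by
    intro A hA
    ext x
    rw [hmemG]
    constructor
    · rintro ⟨b, hb, rfl⟩
      rw [hmemF] at hb
      obtain ⟨a, ha, hab⟩ := hb
      have : e a = b := Subtype.ext hab
      rw [← this, Equiv.symm_apply_apply]
      exact ha
    · intro hx
      exact ⟨e ⟨x, hA hx⟩, by rw [hmemF]; exact ⟨⟨x, hA hx⟩, hx, rfl⟩,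
        by rw [Equiv.symm_apply_apply]⟩
  have hFG : ∀ B ⊆ S', F (G B) = B := by
    intro B hB
    ext x
    rw [hmemF]
    constructor
    · rintro ⟨a, ha, rfl⟩
      rw [hmemG] at ha
      obtain ⟨b, hb, hab⟩ := ha
      have : e.symm b = a := Subtype.ext hab
      rw [← this, Equiv.apply_symm_apply]
      exact hb
    · intro hx
      exact ⟨e.symm ⟨x, hB hx⟩, by rw [hmemG]; exact ⟨⟨x, hB hx⟩, hx, rfl⟩,
        by rw [Equiv.apply_symm_apply]⟩
  have hFsub : ∀ A ⊆ S, F A ⊆ S' := by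
    intro A _ b hb
    rw [hmemF] at hb
    obtain ⟨a, _, rfl⟩ := hb
    exact (e a).2
  have hGsub : ∀ B ⊆ S', G B ⊆ S := by
    intro B _ a ha
    rw [hmemG] at ha
    obtain ⟨b, _, rfl⟩ := ha
    exact (e.symm b).2
  have hFcard : ∀ A ⊆ S, (F A).card = A.card := by
    intro A hA
    simp only [F, Finset.card_map]
    rw [Finset.card_subtype, Finset.filter_true_of_mem (fun x hx => hA hx)]
  have hGcard : ∀ B ⊆ S', (G B).card = B.card := by
    intro B hB
    simp only [G, Finset.card_map]
    rw [Finset.card_subtype, Finset.filter_true_of_mem (fun x hx => hB hx)]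
  have hFdisj : ∀ A ⊆ S, ∀ B ⊆ S, Disjoint A B → Disjoint (F A) (F B) := by
    intro A _ B _ hAB
    rw [Finset.disjoint_left] at hAB ⊢
    intro b hbA hbB
    rw [hmemF] at hbA hbB
    obtain ⟨a₁, ha₁, h₁⟩ := hbA
    obtain ⟨a₂, ha₂, h₂⟩ := hbB
    have : a₁ = a₂ := e.injective (Subtype.ext (h₁.trans h₂.symm))
    exact hAB ha₁ (this ▸ ha₂)
  have hGdisj : ∀ A ⊆ S', ∀ B ⊆ S', Disjoint A B → Disjoint (G A) (G B) := by
    intro A _ B _ hAB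
    rw [Finset.disjoint_left] at hAB ⊢
    intro b hbA hbB
    rw [hmemG] at hbA hbB
    obtain ⟨a₁, ha₁, h₁⟩ := hbA
    obtain ⟨a₂, ha₂, h₂⟩ := hbB
    have : a₁ = a₂ := e.symm.injective (Subtype.ext (h₁.trans h₂.symm))
    exact hAB ha₁ (this ▸ ha₂)
  have hFinj : ∀ A ⊆ S, ∀ B ⊆ S, F A = F B → A = B := by
    intro A hA B hB hFAB
    rw [← hGF A hA, ← hGF B hB, hFAB]
  have hGinj : ∀ A ⊆ S', ∀ B ⊆ S', G A = G B → A = B := by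
    intro A hA B hB hFAB
    rw [← hFG A hA, ← hFG B hB, hFAB]
  refine Finset.card_bij' (fun M _ => M.image F) (fun M _ => M.image G) ?_ ?_ ?_ ?_
  · intro M hM
    exact image_mem_matchingsOn F hFsub hFcard hFdisj hFinj hM
  · intro M hM
    exact image_mem_matchingsOn G hGsub hGcard hGdisj hGinj hM
  · intro M hM
    rw [mem_matchingsOn] at hM
    show (M.image F).image G = M
    rw [Finset.image_image]
    calc M.image (G ∘ F) = M.image id := Finset.image_congr (fun A hA => hGF A (hM.1 A hA))
    _ = M := Finset.image_id
  · intro M hM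
    rw [mem_matchingsOn] at hM
    show (M.image G).image F = M
    rw [Finset.image_image]
    calc M.image (F ∘ G) = M.image id := Finset.image_congr (fun A hA => hFG A (hM.1 A hA))
    _ = M := Finset.image_id

end Transfer

/-- Number of `k`-matchings of size `u` on a ground set of size `s`. -/
def numMatchings (k u s : ℕ) : ℕ := (matchingsOn k u (Finset.range s)).card

lemma card_matchingsOn {α : Type*} [DecidableEq α] (k u : ℕ) (S : Finset α) :
    (matchingsOn k u S).card = numMatchings k u S.card :=
  matchingsOn_card_congr k u (by rw [Finset.card_range])

lemma card_extensions {α : Type*} [DecidableEq α] {k u t : ℕ} (hk : 1 ≤ k) (htu : t ≤ u)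
    {V : Finset α} {T : Finset (Finset α)} (hT : T ∈ matchingsOn k t V) :
    ((matchingsOn k u V).filter (fun M => T ⊆ M)).card
      = numMatchings k (u - t) (V.card - k * t) := by
  have hsupp := supp_card hT
  have hsub := supp_subset hT
  rw [mem_matchingsOn] at hT
  obtain ⟨hT1, hT2, hT3, hT4⟩ := hT
  have key : (matchingsOn k (u - t) (V \ T.biUnion id)).card
      = numMatchings k (u - t) (V.card - k * t) := by
    rw [card_matchingsOn, Finset.card_sdiff_of_subset hsub, hsupp]
  rw [← key]
  refine Finset.card_bij' (fun M _ => M \ T) (fun M' _ => M' ∪ T) ?_ ?_ ?_ ?_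
  · intro M hM
    rw [Finset.mem_filter] at hM
    obtain ⟨hM, hTM⟩ := hM
    rw [mem_matchingsOn] at hM ⊢
    obtain ⟨h1, h2, h3, h4⟩ := hM
    refine ⟨?_, ?_, fun e he => h3 e (Finset.mem_sdiff.mp he).1,
      fun e₁ he₁ e₂ he₂ hne => h4 e₁ (Finset.mem_sdiff.mp he₁).1 e₂ (Finset.mem_sdiff.mp he₂).1 hne⟩
    · intro e he
      rw [Finset.mem_sdiff] at he
      rw [Finset.subset_sdiff]
      refine ⟨h1 e he.1, Finset.disjoint_biUnion_right _ _ _ |>.mpr ?_⟩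
      intro f hf
      exact h4 e he.1 f (hTM hf) (fun hef => he.2 (hef ▸ hf))
    · rw [Finset.card_sdiff_of_subset hTM, h2, hT2]
  · intro M' hM'
    rw [mem_matchingsOn] at hM'
    obtain ⟨h1, h2, h3, h4⟩ := hM'
    have hdisjMT : Disjoint M' T := by
      rw [Finset.disjoint_left]
      intro e heM heT
      have hes : e ⊆ V \ T.biUnion id := h1 e heM
      have hek : e.card = k := h3 e heM
      obtain ⟨a, ha⟩ := Finset.card_pos.mp (by omega : 0 < e.card)
      exact (Finset.mem_sdiff.mp (hes ha)).2 (Finset.mem_biUnion.mpr ⟨e, heT, ha⟩)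
    rw [Finset.mem_filter]
    constructor
    · rw [mem_matchingsOn]
      refine ⟨?_, ?_, ?_, ?_⟩
      · intro e he
        rcases Finset.mem_union.mp he with h | h
        · exact (h1 e h).trans (Finset.sdiff_subset)
        · exact hT1 e h
      · rw [Finset.card_union_of_disjoint hdisjMT, h2, hT2]
        omega
      · intro e he
        rcases Finset.mem_union.mp he with h | h
        · exact h3 e h
        · exact hT3 e h
      · intro e₁ he₁ e₂ he₂ hne
        rcases Finset.mem_union.mp he₁ with ha | ha <;>
          rcases Finset.mem_union.mp he₂ with hb | hb
        · exact h4 e₁ ha e₂ hb hne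
        · exact (Finset.subset_sdiff.mp (h1 e₁ ha)).2.mono_right
            (Finset.subset_biUnion_of_mem id hb)
        · exact ((Finset.subset_sdiff.mp (h1 e₂ hb)).2.mono_right
            (Finset.subset_biUnion_of_mem id ha)).symm
        · exact hT4 e₁ ha e₂ hb hne
    · exact Finset.subset_union_right
  · intro M hM
    exact Finset.sdiff_union_of_subset (Finset.mem_filter.mp hM).2
  · intro M' hM'
    rw [mem_matchingsOn] at hM'
    have hdisjMT : Disjoint M' T := by
      rw [Finset.disjoint_left]
      intro e heM heT
      have hes : e ⊆ V \ T.biUnion id := hM'.1 e heM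
      have hek : e.card = k := hM'.2.2.1 e heM
      obtain ⟨a, ha⟩ := Finset.card_pos.mp (by omega : 0 < e.card)
      exact (Finset.mem_sdiff.mp (hes ha)).2 (Finset.mem_biUnion.mpr ⟨e, heT, ha⟩)
    exact Finset.union_sdiff_cancel_right hdisjMT

section Counting
variable {α : Type*} [DecidableEq α]

lemma sum_exchange {k u : ℕ} (V : Finset α) (Y : Finset (Finset (Finset α))) :
    ∑ T ∈ Y, ((matchingsOn k u V).filter (fun M => T ⊆ M)).card
      = ∑ M ∈ matchingsOn k u V, (Y.filter (fun T => T ⊆ M)).card := by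
  simp only [Finset.card_filter]
  exact Finset.sum_comm

lemma total_mul_choose {k u t : ℕ} (hk : 1 ≤ k) (htu : t ≤ u) (V : Finset α) :
    (matchingsOn k u V).card * u.choose t
      = (matchingsOn k t V).card * numMatchings k (u - t) (V.card - k * t) := by
  have h1 : ∑ T ∈ matchingsOn k t V, ((matchingsOn k u V).filter (fun M => T ⊆ M)).card
      = (matchingsOn k t V).card * numMatchings k (u - t) (V.card - k * t) := by
    rw [Finset.sum_congr rfl (fun T hT => card_extensions hk htu hT), Finset.sum_const,
      smul_eq_mul]
  rw [← h1, sum_exchange]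
  have h2 : ∀ M ∈ matchingsOn k u V,
      ((matchingsOn k t V).filter (fun T => T ⊆ M)) = M.powersetCard t := by
    intro M hM
    rw [mem_matchingsOn] at hM
    obtain ⟨hm1, hm2, hm3, hm4⟩ := hM
    ext T
    rw [Finset.mem_filter, Finset.mem_powersetCard, mem_matchingsOn]
    constructor
    · rintro ⟨⟨_, hc, _, _⟩, hTM⟩
      exact ⟨hTM, hc⟩
    · rintro ⟨hTM, hc⟩
      exact ⟨⟨fun e he => hm1 e (hTM he), hc, fun e he => hm3 e (hTM he),
        fun e₁ he₁ e₂ he₂ hne => hm4 e₁ (hTM he₁) e₂ (hTM he₂) hne⟩, hTM⟩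
  rw [Finset.sum_congr rfl (fun M hM => by rw [h2 M hM, Finset.card_powersetCard,
    (mem_matchingsOn.mp hM).2.1]), Finset.sum_const, smul_eq_mul]

lemma bad_le {k u t : ℕ} (hk : 1 ≤ k) (htu : t ≤ u) {V X : Finset α} (hX : X ⊆ V) :
    ((matchingsOn k u V).filter (fun M => t ≤ (M.filter fun S => S ⊆ X).card)).card
      ≤ (matchingsOn k t X).card * numMatchings k (u - t) (V.card - k * t) := by
  have h1 : ∑ T ∈ matchingsOn k t X, ((matchingsOn k u V).filter (fun M => T ⊆ M)).card
      = (matchingsOn k t X).card * numMatchings k (u - t) (V.card - k * t) := by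
    rw [Finset.sum_congr rfl
      (fun T hT => card_extensions hk htu (matchingsOn_mono hX hT)), Finset.sum_const,
      smul_eq_mul]
  rw [← h1, sum_exchange]
  rw [Finset.card_filter]
  apply Finset.sum_le_sum
  intro M hM
  split_ifs with hc
  · rw [Nat.one_le_iff_ne_zero, ← Nat.pos_iff_ne_zero, Finset.card_pos]
    obtain ⟨T, hTsub, hTc⟩ := Finset.exists_subset_card_eq hc
    refine ⟨T, Finset.mem_filter.mpr ⟨?_, hTsub.trans (Finset.filter_subset _ _)⟩⟩
    rw [mem_matchingsOn] at hM ⊢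
    obtain ⟨hm1, hm2, hm3, hm4⟩ := hM
    have hTM : T ⊆ M := hTsub.trans (Finset.filter_subset _ _)
    exact ⟨fun e he => (Finset.mem_filter.mp (hTsub he)).2, hTc,
      fun e he => hm3 e (hTM he),
      fun e₁ he₁ e₂ he₂ hne => hm4 e₁ (hTM he₁) e₂ (hTM he₂) hne⟩
  · exact Nat.zero_le _

lemma card_matchings_supp (k t : ℕ) (S : Finset α) :
    (matchingsOn k t S).card = S.card.choose (k * t) * numMatchings k t (k * t) := by
  rw [Finset.card_eq_sum_card_fiberwise
    (f := fun T => T.biUnion id) (t := S.powersetCard (k * t))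
    (fun T hT => Finset.mem_powersetCard.mpr ⟨supp_subset hT, supp_card hT⟩)]
  have h : ∀ W ∈ S.powersetCard (k * t),
      ((matchingsOn k t S).filter (fun T => T.biUnion id = W)) = matchingsOn k t W := by
    intro W hW
    rw [Finset.mem_powersetCard] at hW
    ext T
    rw [Finset.mem_filter, mem_matchingsOn, mem_matchingsOn]
    constructor
    · rintro ⟨⟨h1, h2, h3, h4⟩, hsupp⟩
      exact ⟨fun e he => hsupp ▸ Finset.subset_biUnion_of_mem id he, h2, h3, h4⟩
    · rintro ⟨h1, h2, h3, h4⟩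
      have hTm : T ∈ matchingsOn k t W := mem_matchingsOn.mpr ⟨h1, h2, h3, h4⟩
      have hsub := supp_subset hTm
      have hcard := supp_card hTm
      have : T.biUnion id = W := Finset.eq_of_subset_of_card_le hsub (by rw [hcard, hW.2])
      exact ⟨⟨fun e he => (h1 e he).trans hW.1, h2, h3, h4⟩, this⟩
  rw [Finset.sum_congr rfl (fun W hW => by
    rw [h W hW, card_matchingsOn, (Finset.mem_powersetCard.mp hW).2]),
    Finset.sum_const, smul_eq_mul, Finset.card_powersetCard]

lemma matchingsOn_nonempty {k : ℕ} (hk : 1 ≤ k) :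
    ∀ (u : ℕ) (V : Finset α), k * u ≤ V.card → (matchingsOn k u V).Nonempty := by
  intro u
  induction u with
  | zero =>
    intro V _
    exact ⟨∅, mem_matchingsOn.mpr (by simp)⟩
  | succ u ih =>
    intro V hV
    have hkV : k ≤ V.card := le_trans (by nlinarith) hV
    obtain ⟨e, heV, hec⟩ := Finset.exists_subset_card_eq hkV
    have hcd : k * u ≤ (V \ e).card := by
      rw [Finset.card_sdiff_of_subset heV, hec]
      have : k * (u + 1) = k * u + k := by ring
      omega
    obtain ⟨M, hM⟩ := ih (V \ e) hcd
    rw [mem_matchingsOn] at hM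
    obtain ⟨h1, h2, h3, h4⟩ := hM
    have heM : e ∉ M := by
      intro hmem
      obtain ⟨a, ha⟩ := Finset.card_pos.mp (by omega : 0 < e.card)
      exact (Finset.mem_sdiff.mp (h1 e hmem ha)).2 ha
    refine ⟨insert e M, mem_matchingsOn.mpr ⟨?_, ?_, ?_, ?_⟩⟩
    · intro f hf
      rcases Finset.mem_insert.mp hf with h | h
      · exact h ▸ heV
      · exact (h1 f h).trans Finset.sdiff_subset
    · rw [Finset.card_insert_of_notMem heM, h2]
    · intro f hf
      rcases Finset.mem_insert.mp hf with h | h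
      · exact h ▸ hec
      · exact h3 f h
    · intro f₁ hf₁ f₂ hf₂ hne
      rcases Finset.mem_insert.mp hf₁ with ha | ha <;>
        rcases Finset.mem_insert.mp hf₂ with hb | hb
      · exact absurd (ha.trans hb.symm) hne
      · subst ha
        exact ((Finset.subset_sdiff.mp (h1 f₂ hb)).2).symm
      · subst hb
        exact (Finset.subset_sdiff.mp (h1 f₁ ha)).2
      · exact h4 f₁ ha f₂ hb hne

end Counting

lemma descFactorial_ratio (m : ℕ) {x n : ℕ} (h : x ≤ n) :
    x.descFactorial m * n ^ m ≤ n.descFactorial m * x ^ m := by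
  induction m with
  | zero => simp
  | succ m ih =>
    rw [Nat.descFactorial_succ, Nat.descFactorial_succ, pow_succ, pow_succ]
    have key : (x - m) * n ≤ (n - m) * x := by
      calc (x - m) * n = x * n - m * n := by rw [Nat.sub_mul]
      _ ≤ n * x - m * x := by
          rw [mul_comm x n]
          exact Nat.sub_le_sub_left (Nat.mul_le_mul_left m h) _
      _ = (n - m) * x := by rw [Nat.sub_mul]
    calc (x - m) * x.descFactorial m * (n ^ m * n)
        = ((x - m) * n) * (x.descFactorial m * n ^ m) := by ring
      _ ≤ ((n - m) * x) * (n.descFactorial m * x ^ m) := Nat.mul_le_mul key ih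
      _ = (n - m) * n.descFactorial m * (x ^ m * x) := by ring

lemma choose_ratio (m : ℕ) {x n : ℕ} (h : x ≤ n) :
    x.choose m * n ^ m ≤ n.choose m * x ^ m := by
  have hm : 0 < m.factorial := Nat.factorial_pos m
  apply Nat.le_of_mul_le_mul_left _ hm
  calc m.factorial * (x.choose m * n ^ m) = x.descFactorial m * n ^ m := by
        rw [Nat.descFactorial_eq_factorial_mul_choose, mul_assoc]
    _ ≤ n.descFactorial m * x ^ m := descFactorial_ratio m h
    _ = m.factorial * (n.choose m * x ^ m) := by
        rw [Nat.descFactorial_eq_factorial_mul_choose, mul_assoc]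


/-- If `M` is a `k`-matching of size `u` on an `n`-set `V` chosen uniformly at random and
`X ⊆ V` with `|X| = x`, then
`Pr[|M ∩ [X]^k| ≥ t] ≤ C(u,t)·C(x,kt)/C(n,kt) ≤ (u·x^k/n^k)^t`. -/
theorem stmt17 {α : Type*} [DecidableEq α] (k n u x t : ℕ)
    (hk : 1 ≤ k) (hn : 0 < n) (hu : 0 < u) (hx : 0 < x) (ht : 0 < t)
    (hku : k * u ≤ n)
    (V : Finset α) (hV : V.card = n) (X : Finset α) (hX : X ⊆ V) (hXc : X.card = x) :
    (((matchingsOn k u V).filter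
        fun M => t ≤ (M.filter fun S => S ⊆ X).card).card : ℝ) /
        ((matchingsOn k u V).card : ℝ) ≤
      (u.choose t : ℝ) * (x.choose (k * t) : ℝ) / (n.choose (k * t) : ℝ) ∧
    (u.choose t : ℝ) * (x.choose (k * t) : ℝ) / (n.choose (k * t) : ℝ) ≤
      ((u : ℝ) * (x : ℝ) ^ k / (n : ℝ) ^ k) ^ t := by
  have hxn : x ≤ n := by rw [← hV, ← hXc]; exact Finset.card_le_card hX
  constructor
  · -- Part 1
    have htotal : 0 < ((matchingsOn k u V).card : ℝ) := by
      have := matchingsOn_nonempty hk u V (hV ▸ hku)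
      exact_mod_cast Finset.card_pos.mpr this
    have hRHSnn : 0 ≤ (u.choose t : ℝ) * (x.choose (k * t) : ℝ) / (n.choose (k * t) : ℝ) := by
      positivity
    by_cases htu : t ≤ u
    · by_cases hktn : k * t ≤ n
      · have hcnm : 0 < ((n.choose (k * t)) : ℝ) := by
          exact_mod_cast Nat.choose_pos hktn
        rw [div_le_div_iff₀ htotal hcnm]
        have keyNat : ((matchingsOn k u V).filter
            fun M => t ≤ (M.filter fun S => S ⊆ X).card).card * n.choose (k * t)
            ≤ u.choose t * x.choose (k * t) * (matchingsOn k u V).card := by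
          have hA := total_mul_choose (t := t) hk htu V
          have hB := bad_le (t := t) hk htu hX
          rw [hV] at hA hB
          have hDX := card_matchings_supp k t X
          have hDV := card_matchings_supp k t V
          rw [hXc] at hDX
          rw [hV] at hDV
          calc ((matchingsOn k u V).filter
              fun M => t ≤ (M.filter fun S => S ⊆ X).card).card * n.choose (k * t)
              ≤ (matchingsOn k t X).card * numMatchings k (u - t) (n - k * t)
                  * n.choose (k * t) := Nat.mul_le_mul_right _ hB
            _ = x.choose (k * t) * ((matchingsOn k t V).card
                  * numMatchings k (u - t) (n - k * t)) := by
                rw [hDX, hDV]; ring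
            _ = x.choose (k * t) * ((matchingsOn k u V).card * u.choose t) := by rw [hA]
            _ = u.choose t * x.choose (k * t) * (matchingsOn k u V).card := by ring
        exact_mod_cast keyNat
      · -- k * t > n : no t-matching fits inside X, so the bad set is empty
        have hmtX : (matchingsOn k t X).card = 0 := by
          rw [Finset.card_eq_zero]
          by_contra h
          obtain ⟨T, hT⟩ := Finset.nonempty_iff_ne_empty.mpr h
          have h1 := supp_card hT
          have h2 := Finset.card_le_card (supp_subset hT)
          omega
        have hbad := bad_le (t := t) hk htu hX
        rw [hmtX, Nat.zero_mul, Nat.le_zero] at hbad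
        rw [hbad]
        simpa using hRHSnn
    · -- t > u : the bad set is empty since a matching has only u edges
      have hbad : ((matchingsOn k u V).filter
          fun M => t ≤ (M.filter fun S => S ⊆ X).card).card = 0 := by
        rw [Finset.card_eq_zero, Finset.filter_eq_empty_iff]
        intro M hM
        have h1 : (M.filter fun S => S ⊆ X).card ≤ M.card :=
          Finset.card_le_card (Finset.filter_subset _ _)
        have h2 := (mem_matchingsOn.mp hM).2.1
        omega
      rw [hbad]
      simpa using hRHSnn
  · -- Part 2
    have hrhs : ((u : ℝ) * (x : ℝ) ^ k / (n : ℝ) ^ k) ^ t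
        = ((u : ℝ) ^ t * (x : ℝ) ^ (k * t)) / (n : ℝ) ^ (k * t) := by
      rw [div_pow, mul_pow, pow_mul, pow_mul]
    rw [hrhs]
    by_cases hcn : n.choose (k * t) = 0
    · have hcx : x.choose (k * t) = 0 :=
        Nat.choose_eq_zero_of_lt (lt_of_le_of_lt hxn (Nat.choose_eq_zero_iff.mp hcn))
      rw [hcx]
      simp only [Nat.cast_zero, mul_zero, zero_div]
      positivity
    · have hcn' : 0 < ((n.choose (k * t)) : ℝ) := by
        simp only [Nat.cast_pos]; omega
      have hnp : 0 < ((n : ℝ)) ^ (k * t) := by positivity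
      rw [div_le_div_iff₀ hcn' hnp]
      have keyNat : u.choose t * x.choose (k * t) * n ^ (k * t)
          ≤ u ^ t * x ^ (k * t) * n.choose (k * t) := by
        calc u.choose t * x.choose (k * t) * n ^ (k * t)
            = u.choose t * (x.choose (k * t) * n ^ (k * t)) := by ring
          _ ≤ u ^ t * (n.choose (k * t) * x ^ (k * t)) :=
            Nat.mul_le_mul (Nat.choose_le_pow u t) (choose_ratio (k * t) hxn)
          _ = u ^ t * x ^ (k * t) * n.choose (k * t) := by ring
      exact_mod_cast keyNat
end

section
/- Let k ≥ 2 be an integer and let c_0, c_1 be reals with 0 < c_0 ≤ 1/(8·e²·k!) and c_1 = 1/(4·k!). Let n, u, m, x be positive integers with k·u ≤ n and m·u ≤ c_0·n^k, and suppose that t := ⌈c_1·x^k⌉ satisfies t ≤ m. Let V be an n-element set, let X ⊆ V with |X| = x, and let M_1, …, M_m be independent k-matchings of size u on V, each chosen uniformly at random; set U_m := M_1 ∪ … ∪ M_m (a family of k-element subsets of V). Then Pr[|U_m ∩ [X]^k| > c_1·x^k] ≤ exp(−c_1·x^k). -/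
/-!
Write `Y M = #(M ∩ [X]^k)` and `q = u x^k / n^k`. By the binomial theorem
`z^Y = ∑_j C(Y, j) (z - 1)^j`, and `∑_M C(Y M, j)` counts the pairs `A ⊆ M` where `A` is a
`j`-matching inside `X`. The `u`-matchings containing a fixed `j`-matching `A` are the
`(u - j)`-matchings of `V \ ⋃ A`, and `u! · #(u-matchings of an n-set) = ∏_{i<u} C(n - ik, k)`;
comparing these products factor by factor through `C(x - c, k) n^k ≤ C(n - c, k) x^k` gives
`E[C(Y, j)] ≤ q^j / j!`, hence `E[z^Y] ≤ exp((z - 1) q)`. As `#(U_m ∩ [X]^k) ≤ ∑_i Y(M_i)` and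
the `M_i` are independent, Markov's inequality for `exp(2 ∑_i Y(M_i))` bounds the probability by
`exp(m (e² - 1) q - 2 s)` with `s = c₁ x^k`, and the choice of `c₀` makes `m (e² - 1) q ≤ s / 2`.
-/

open Finset
open scoped Nat

def orderedMatchingCount (k n u : ℕ) : ℕ := ∏ i ∈ range u, (n - k * i).choose k

theorem orderedMatchingCount_add (k n j l : ℕ) :
    orderedMatchingCount k n (j + l) =
      orderedMatchingCount k n j * orderedMatchingCount k (n - k * j) l := by
  simp only [orderedMatchingCount, prod_range_add, Nat.sub_sub, mul_add]

theorem orderedMatchingCount_one (k n : ℕ) : orderedMatchingCount k n 1 = n.choose k := by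
  simp [orderedMatchingCount]

theorem choose_sub_mul_pow_le {x n : ℕ} (hxn : x ≤ n) (c k : ℕ) :
    (x - c).choose k * n ^ k ≤ (n - c).choose k * x ^ k := by
  have hdesc : (x - c).descFactorial k * n ^ k ≤ (n - c).descFactorial k * x ^ k := by
    have h := prod_le_prod' (s := range k) fun i _ => show (x - c - i) * n ≤ (n - c - i) * x by
      rw [Nat.sub_sub, Nat.sub_sub, Nat.sub_mul, Nat.sub_mul, mul_comm x n]
      exact Nat.sub_le_sub_left (Nat.mul_le_mul_left _ hxn) _
    rwa [prod_mul_distrib, prod_mul_distrib, prod_const, prod_const, card_range,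
      ← Nat.descFactorial_eq_prod_range, ← Nat.descFactorial_eq_prod_range] at h
  rw [Nat.descFactorial_eq_factorial_mul_choose, Nat.descFactorial_eq_factorial_mul_choose,
    mul_assoc, mul_assoc] at hdesc
  exact Nat.le_of_mul_le_mul_left hdesc k.factorial_pos

theorem orderedMatchingCount_mul_pow_le {x n : ℕ} (hxn : x ≤ n) (k j : ℕ) :
    orderedMatchingCount k x j * n ^ (k * j) ≤ orderedMatchingCount k n j * x ^ (k * j) := by
  have h := prod_le_prod' (s := range j) fun i _ => choose_sub_mul_pow_le hxn (k * i) k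
  rwa [prod_mul_distrib, prod_mul_distrib, prod_const, prod_const, card_range, ← pow_mul,
    ← pow_mul] at h

theorem pow_eq_sum_range_choose (z : ℝ) {Y u : ℕ} (hY : Y ≤ u) :
    z ^ Y = ∑ j ∈ range (u + 1), (z - 1) ^ j * Y.choose j := by
  conv_lhs => rw [← sub_add_cancel z 1, add_pow]
  simp only [one_pow, mul_one]
  exact sum_subset (range_subset_range.2 (by omega)) fun j _ hj => by
    rw [Nat.choose_eq_zero_of_lt (by simpa using hj), Nat.cast_zero, mul_zero]

theorem card_filter_lt_sum_mul_exp_le {β : Type*} (𝓜 : Finset β) (Y : β → ℝ) (m : ℕ) {r : ℝ}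
    (hr : 0 ≤ r) (s : ℝ) :
    #((Fintype.piFinset fun _ : Fin m => 𝓜).filter fun f => s < ∑ i, Y (f i)) *
        Real.exp (r * s) ≤
      (∑ M ∈ 𝓜, Real.exp (r * Y M)) ^ m := by
  calc #((Fintype.piFinset fun _ : Fin m => 𝓜).filter fun f => s < ∑ i, Y (f i)) *
        Real.exp (r * s)
      = ∑ f ∈ (Fintype.piFinset fun _ : Fin m => 𝓜).filter (fun f => s < ∑ i, Y (f i)),
          Real.exp (r * s) := by rw [sum_const, nsmul_eq_mul]
    _ ≤ ∑ f ∈ (Fintype.piFinset fun _ : Fin m => 𝓜).filter (fun f => s < ∑ i, Y (f i)),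
          ∏ i, Real.exp (r * Y (f i)) := by
        refine sum_le_sum fun f hf => ?_
        rw [← Real.exp_sum, ← mul_sum]
        exact Real.exp_le_exp.2 (mul_le_mul_of_nonneg_left (mem_filter.1 hf).2.le hr)
    _ ≤ ∑ f ∈ Fintype.piFinset fun _ : Fin m => 𝓜, ∏ i, Real.exp (r * Y (f i)) :=
        sum_le_sum_of_subset_of_nonneg (filter_subset _ _) fun _ _ _ =>
          prod_nonneg fun _ _ => (Real.exp_pos _).le
    _ = (∑ M ∈ 𝓜, Real.exp (r * Y M)) ^ m := by
        rw [← prod_univ_sum (fun _ : Fin m => 𝓜) fun _ M => Real.exp (r * Y M), prod_const,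
          Finset.card_univ, Fintype.card_fin]

section Matchings

variable {α : Type*} [DecidableEq α] {k u j : ℕ} {V X : Finset α} {M A : Finset (Finset α)}

theorem mem_matchingsOn_s18 :
    M ∈ matchingsOn k u V ↔
      M ⊆ V.powersetCard k ∧ #M = u ∧ (M : Set (Finset α)).PairwiseDisjoint id := by
  simp only [matchingsOn, mem_filter, mem_powerset, subset_iff, mem_powersetCard, forall_and,
    Set.PairwiseDisjoint, Set.Pairwise, mem_coe, Function.onFun, id]
  tauto

theorem matchingsOn_zero : matchingsOn k 0 V = {∅} := by
  ext M
  simp only [mem_matchingsOn_s18, Finset.card_eq_zero, mem_singleton]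
  constructor
  · exact fun h => h.2.1
  · rintro rfl
    simp

theorem matchingsOn_one : matchingsOn k 1 V = (V.powersetCard k).image singleton := by
  ext M
  simp only [mem_matchingsOn_s18, mem_image, card_eq_one]
  constructor
  · rintro ⟨hMV, ⟨e, rfl⟩, -⟩
    exact ⟨e, singleton_subset_iff.1 hMV, rfl⟩
  · rintro ⟨e, he, rfl⟩
    exact ⟨singleton_subset_iff.2 he, ⟨e, rfl⟩, by simp⟩

theorem card_matchingsOn_one : #(matchingsOn k 1 V) = (#V).choose k := by
  rw [matchingsOn_one, card_image_of_injective _ singleton_injective, card_powersetCard]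

theorem matchingsOn_mono_s18 (hXV : X ⊆ V) : matchingsOn k j X ⊆ matchingsOn k j V := fun _ hA =>
  let ⟨hAX, hAj, hAdisj⟩ := mem_matchingsOn_s18.1 hA
  mem_matchingsOn_s18.2 ⟨hAX.trans (powersetCard_mono hXV), hAj, hAdisj⟩

theorem card_filter_subset_le_of_mem_matchingsOn (hM : M ∈ matchingsOn k u V) :
    #(M.filter (· ⊆ X)) ≤ u :=
  (card_filter_le _ _).trans (mem_matchingsOn_s18.1 hM).2.1.le

theorem card_biUnion_of_mem_matchingsOn (hA : A ∈ matchingsOn k j V) :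
    #(A.biUnion id) = j * k := by
  obtain ⟨hAV, rfl, hdisj⟩ := mem_matchingsOn_s18.1 hA
  rw [card_biUnion hdisj]
  exact sum_const_nat fun e he => (mem_powersetCard.1 (hAV he)).2

theorem biUnion_subset_of_mem_matchingsOn (hA : A ∈ matchingsOn k j V) : A.biUnion id ⊆ V :=
  biUnion_subset.2 fun _ he => (mem_powersetCard.1 ((mem_matchingsOn_s18.1 hA).1 he)).1

theorem card_filter_superset_matchingsOn (hk : 0 < k) (hA : A ∈ matchingsOn k j V)
    (hj : j ≤ u) :
    #((matchingsOn k u V).filter (A ⊆ ·)) = #(matchingsOn k (u - j) (V \ A.biUnion id)) := by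
  obtain ⟨hAV, hAj, hAdisj⟩ := mem_matchingsOn_s18.1 hA
  have edge_disjoint {M' : Finset (Finset α)}
      (hM' : M' ∈ matchingsOn k (u - j) (V \ A.biUnion id)) {e} (he : e ∈ M') :
      Disjoint e (A.biUnion id) :=
    (subset_sdiff.1 (mem_powersetCard.1 ((mem_matchingsOn_s18.1 hM').1 he)).1).2
  have family_disjoint {M'} (hM' : M' ∈ matchingsOn k (u - j) (V \ A.biUnion id)) :
      Disjoint M' A := by
    refine disjoint_left.2 fun e heM' heA => ?_
    have hek := (mem_powersetCard.1 (hAV heA)).2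
    have he : e = ∅ :=
      disjoint_self.1 ((edge_disjoint hM' heM').mono_right (subset_biUnion_of_mem id heA))
    rw [he, card_empty] at hek
    omega
  refine card_nbij' (· \ A) (· ∪ A) ?_ ?_ ?_ ?_
  · intro M hM
    simp only [coe_filter, Set.mem_ofPred_eq, mem_coe] at hM ⊢
    obtain ⟨hMV, hMu, hMdisj⟩ := mem_matchingsOn_s18.1 hM.1
    refine mem_matchingsOn_s18.2 ⟨fun e he => ?_, by rw [card_sdiff_of_subset hM.2, hMu, hAj],
      hMdisj.subset (by simp)⟩
    obtain ⟨heM, heA⟩ := mem_sdiff.1 he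
    obtain ⟨heV, hek⟩ := mem_powersetCard.1 (hMV heM)
    refine mem_powersetCard.2 ⟨subset_sdiff.2 ⟨heV, (disjoint_biUnion_right _ _ _).2
      fun e' he' => hMdisj heM (hM.2 he') (ne_of_mem_of_not_mem he' heA).symm⟩, hek⟩
  · intro M' hM'
    simp only [coe_filter, Set.mem_ofPred_eq, mem_coe] at hM' ⊢
    obtain ⟨hM'V, hM'u, hM'disj⟩ := mem_matchingsOn_s18.1 hM'
    refine ⟨mem_matchingsOn_s18.2 ⟨union_subset (hM'V.trans (powersetCard_mono sdiff_subset)) hAV,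
      by rw [card_union_of_disjoint (family_disjoint hM'), hM'u, hAj]; omega, ?_⟩,
      subset_union_right⟩
    rw [coe_union, Set.pairwiseDisjoint_union]
    exact ⟨hM'disj, hAdisj, fun e he e' he' _ =>
      (edge_disjoint hM' he).mono_right (subset_biUnion_of_mem id he')⟩
  · intro M hM
    exact sdiff_union_of_subset (mem_filter.1 hM).2
  · intro M' hM'
    exact union_sdiff_cancel_right (family_disjoint hM')

theorem powersetCard_filter_subset_eq (hM : M ∈ matchingsOn k u V) :
    (M.filter (· ⊆ X)).powersetCard j = (matchingsOn k j X).filter (· ⊆ M) := by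
  obtain ⟨hMV, -, hMdisj⟩ := mem_matchingsOn_s18.1 hM
  ext A
  simp only [mem_powersetCard, mem_filter, mem_matchingsOn_s18, subset_iff]
  constructor
  · rintro ⟨hA, rfl⟩
    exact ⟨⟨fun e he => ⟨(hA he).2, (mem_powersetCard.1 (hMV (hA he).1)).2⟩, rfl,
      hMdisj.subset fun e he => (hA he).1⟩, fun e he => (hA he).1⟩
  · rintro ⟨⟨hAX, rfl, -⟩, hAM⟩
    exact ⟨fun e he => ⟨hAM he, (hAX he).1⟩, rfl⟩

theorem sum_choose_card_filter_subset :
    ∑ M ∈ matchingsOn k u V, (#(M.filter (· ⊆ X))).choose j =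
      ∑ A ∈ matchingsOn k j X, #((matchingsOn k u V).filter (A ⊆ ·)) := by
  calc ∑ M ∈ matchingsOn k u V, (#(M.filter (· ⊆ X))).choose j
      = ∑ M ∈ matchingsOn k u V, #((matchingsOn k j X).filter (· ⊆ M)) :=
        sum_congr rfl fun M hM => by rw [← card_powersetCard, powersetCard_filter_subset_eq hM]
    _ = _ := by simp only [card_filter]; exact sum_comm

theorem card_matchingsOn_mul_factorial (hk : 0 < k) (u : ℕ) (V : Finset α) :
    #(matchingsOn k u V) * u ! = orderedMatchingCount k #V u := by
  induction u generalizing V with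
  | zero => simp [matchingsOn_zero, orderedMatchingCount]
  | succ u ih =>
    -- `∑_M C(#M, 1)` counts the pairs `e ∈ M`, and the matchings through `e` are those of `V \ e`
    have hsum := sum_choose_card_filter_subset (k := k) (u := u + 1) (V := V) (X := V) (j := 1)
    have hterm : ∀ M ∈ matchingsOn k (u + 1) V, (#(M.filter (· ⊆ V))).choose 1 = u + 1 := by
      intro M hM
      obtain ⟨hMV, hMu, -⟩ := mem_matchingsOn_s18.1 hM
      rw [filter_true_of_mem fun e he => (mem_powersetCard.1 (hMV he)).1, hMu, Nat.choose_one_right]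
    have hfilter : ∀ A ∈ matchingsOn k 1 V,
        #((matchingsOn k (u + 1) V).filter (A ⊆ ·)) * u ! = orderedMatchingCount k (#V - k) u := by
      intro A hA
      rw [card_filter_superset_matchingsOn hk hA (by omega), Nat.add_sub_cancel, ih,
        card_sdiff_of_subset (biUnion_subset_of_mem_matchingsOn hA),
        card_biUnion_of_mem_matchingsOn hA, one_mul]
    rw [sum_congr rfl hterm, sum_const, smul_eq_mul] at hsum
    calc #(matchingsOn k (u + 1) V) * (u + 1)!
        = (#(matchingsOn k (u + 1) V) * (u + 1)) * u ! := by rw [Nat.factorial_succ]; ring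
      _ = #(matchingsOn k 1 V) * orderedMatchingCount k (#V - k) u := by
          rw [hsum, sum_mul, sum_congr rfl hfilter, sum_const, smul_eq_mul]
      _ = orderedMatchingCount k #V (u + 1) := by
          rw [card_matchingsOn_one, add_comm u, orderedMatchingCount_add,
            orderedMatchingCount_one, mul_one]

theorem sum_choose_card_filter_mul_le (hk : 0 < k) (hXV : X ⊆ V) (j : ℕ) :
    (∑ M ∈ matchingsOn k u V, (#(M.filter (· ⊆ X))).choose j) * j ! * #V ^ (k * j) ≤
      #(matchingsOn k u V) * u ^ j * #X ^ (k * j) := by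
  obtain hj | hj := le_or_gt j u
  swap
  · rw [sum_eq_zero fun M hM =>
      Nat.choose_eq_zero_of_lt ((card_filter_subset_le_of_mem_matchingsOn hM).trans_lt hj)]
    simp
  set S := ∑ M ∈ matchingsOn k u V, (#(M.filter (· ⊆ X))).choose j with hS_def
  have hS : S * (u - j)! =
      #(matchingsOn k j X) * orderedMatchingCount k (#V - k * j) (u - j) := by
    rw [hS_def, sum_choose_card_filter_subset, sum_mul, ← smul_eq_mul, ← sum_const]
    refine sum_congr rfl fun A hA => ?_
    have hAV := matchingsOn_mono_s18 hXV hA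
    rw [card_filter_superset_matchingsOn hk hAV hj, card_matchingsOn_mul_factorial hk,
      card_sdiff_of_subset (biUnion_subset_of_mem_matchingsOn hAV),
      card_biUnion_of_mem_matchingsOn hAV, mul_comm j]
  have hsplit := orderedMatchingCount_add k #V j (u - j)
  rw [Nat.add_sub_cancel' hj] at hsplit
  refine Nat.le_of_mul_le_mul_right ?_ (Nat.factorial_pos u)
  calc S * j ! * #V ^ (k * j) * u !
      = S * (u - j)! * j ! * #V ^ (k * j) * u.descFactorial j := by
        rw [← Nat.factorial_mul_descFactorial hj]; ring
    _ = (#(matchingsOn k j X) * j !) * #V ^ (k * j) *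
          orderedMatchingCount k (#V - k * j) (u - j) * u.descFactorial j := by
        rw [hS]; ring
    _ = orderedMatchingCount k #X j * #V ^ (k * j) *
          orderedMatchingCount k (#V - k * j) (u - j) * u.descFactorial j := by
        rw [card_matchingsOn_mul_factorial hk]
    _ ≤ orderedMatchingCount k #V j * #X ^ (k * j) *
          orderedMatchingCount k (#V - k * j) (u - j) * u ^ j :=
        Nat.mul_le_mul (Nat.mul_le_mul_right _
          (orderedMatchingCount_mul_pow_le (card_le_card hXV) k j)) (Nat.descFactorial_le_pow u j)
    _ = #(matchingsOn k u V) * u ! * u ^ j * #X ^ (k * j) := by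
        rw [card_matchingsOn_mul_factorial hk, hsplit]; ring
    _ = #(matchingsOn k u V) * u ^ j * #X ^ (k * j) * u ! := by ring

theorem sum_pow_card_filter_le (hk : 0 < k) (hXV : X ⊆ V) (hV : 0 < #V) {z : ℝ}
    (hz : 1 ≤ z) :
    ∑ M ∈ matchingsOn k u V, z ^ #(M.filter (· ⊆ X)) ≤
      #(matchingsOn k u V) * Real.exp ((z - 1) * (u * #X ^ k / #V ^ k)) := by
  set q : ℝ := u * #X ^ k / #V ^ k
  have hmoment : ∀ j, (∑ M ∈ matchingsOn k u V, ((#(M.filter (· ⊆ X))).choose j : ℝ)) * j ! ≤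
      #(matchingsOn k u V) * q ^ j := fun j => by
    have h := sum_choose_card_filter_mul_le (u := u) hk hXV j
    rw [div_pow, mul_pow, ← pow_mul, ← pow_mul, mul_div_assoc', ← mul_assoc,
      le_div_iff₀ (by positivity)]
    exact_mod_cast h
  calc ∑ M ∈ matchingsOn k u V, z ^ #(M.filter (· ⊆ X))
      = ∑ j ∈ range (u + 1),
          (z - 1) ^ j * ∑ M ∈ matchingsOn k u V, ((#(M.filter (· ⊆ X))).choose j : ℝ) := by
        simp only [mul_sum]
        rw [sum_comm]
        exact sum_congr rfl fun M hM =>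
          pow_eq_sum_range_choose z (card_filter_subset_le_of_mem_matchingsOn hM)
    _ ≤ ∑ j ∈ range (u + 1), (z - 1) ^ j * (#(matchingsOn k u V) * q ^ j / j !) := by
        refine sum_le_sum fun j _ => mul_le_mul_of_nonneg_left
          ((le_div_iff₀ (by positivity)).2 (hmoment j)) (pow_nonneg (by linarith) j)
    _ = #(matchingsOn k u V) * ∑ j ∈ range (u + 1), ((z - 1) * q) ^ j / j ! := by
        rw [mul_sum]
        exact sum_congr rfl fun j _ => by rw [mul_pow]; ring
    _ ≤ #(matchingsOn k u V) * Real.exp ((z - 1) * q) := by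
        gcongr
        exact Real.sum_le_exp_of_nonneg (mul_nonneg (by linarith) (by positivity)) _

theorem card_filter_lt_sum_card_filter_subset_le (hk : 0 < k) (hXV : X ⊆ V) (hV : 0 < #V)
    (m : ℕ) {s : ℝ} (hs : 0 ≤ s)
    (hrate : m * ((Real.exp 2 - 1) * (u * #X ^ k / #V ^ k)) ≤ s / 2) :
    (#((Fintype.piFinset fun _ : Fin m => matchingsOn k u V).filter
        fun f => s < ∑ i, (#((f i).filter (· ⊆ X)) : ℝ)) : ℝ) ≤
      Real.exp (-s) * #(matchingsOn k u V) ^ m := by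
  calc (#((Fintype.piFinset fun _ : Fin m => matchingsOn k u V).filter
        fun f => s < ∑ i, (#((f i).filter (· ⊆ X)) : ℝ)) : ℝ)
      ≤ (∑ M ∈ matchingsOn k u V, Real.exp (2 * #(M.filter (· ⊆ X)))) ^ m /
          Real.exp (2 * s) := by
        rw [le_div_iff₀ (Real.exp_pos _)]
        exact card_filter_lt_sum_mul_exp_le (matchingsOn k u V)
          (fun M => (#(M.filter (· ⊆ X)) : ℝ)) m zero_le_two s
    _ ≤ (#(matchingsOn k u V) * Real.exp ((Real.exp 2 - 1) * (u * #X ^ k / #V ^ k))) ^ m /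
          Real.exp (2 * s) := by
        simp only [mul_comm (2 : ℝ), Real.exp_nat_mul]
        gcongr
        exact sum_pow_card_filter_le hk hXV hV (Real.one_le_exp zero_le_two)
    _ = Real.exp (m * ((Real.exp 2 - 1) * (u * #X ^ k / #V ^ k)) - 2 * s) *
          #(matchingsOn k u V) ^ m := by
        rw [mul_pow, ← Real.exp_nat_mul, Real.exp_sub]; ring
    _ ≤ Real.exp (-s) * #(matchingsOn k u V) ^ m := by
        gcongr
        linarith

end Matchings

theorem mul_exp_two_sub_one_mul_le {k n u m x : ℕ} {c₀ c₁ : ℝ}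
    (hc₀ : c₀ ≤ 1 / (8 * Real.exp 1 ^ 2 * (k ! : ℝ))) (hc₁ : c₁ = 1 / (4 * (k ! : ℝ)))
    (hn : 0 < n) (hmu : (m : ℝ) * u ≤ c₀ * (n : ℝ) ^ k) :
    m * ((Real.exp 2 - 1) * (u * x ^ k / n ^ k)) ≤ c₁ * x ^ k / 2 := by
  have hmq : m * (u * x ^ k / n ^ k : ℝ) ≤ c₀ * x ^ k := by
    rw [mul_div_assoc', div_le_iff₀ (by positivity), ← mul_assoc]
    nlinarith [pow_nonneg (Nat.cast_nonneg (α := ℝ) x) k]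
  have hc : Real.exp 2 * c₀ ≤ c₁ / 2 := by
    have he : Real.exp 2 = Real.exp 1 ^ 2 := by rw [← Real.exp_nat_mul]; norm_num
    rw [le_div_iff₀ (by positivity)] at hc₀
    rw [he, hc₁, div_div, le_div_iff₀ (by positivity)]
    linear_combination hc₀
  calc m * ((Real.exp 2 - 1) * (u * x ^ k / n ^ k))
      = (Real.exp 2 - 1) * (m * (u * x ^ k / n ^ k)) := by ring
    _ ≤ Real.exp 2 * (c₀ * x ^ k) := by gcongr; linarith
    _ ≤ c₁ / 2 * x ^ k := by rw [← mul_assoc]; gcongr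
    _ = c₁ * x ^ k / 2 := by ring

theorem stmt18_general {α : Type*} [DecidableEq α] (k : ℕ) (hk : 2 ≤ k) (c₀ c₁ : ℝ)
    (hc₀' : c₀ ≤ 1 / (8 * Real.exp 1 ^ 2 * (k.factorial : ℝ)))
    (hc₁ : c₁ = 1 / (4 * (k.factorial : ℝ)))
    (n u m x : ℕ) (hn : 0 < n)
    (hmu : ((m : ℝ) * u) ≤ c₀ * (n : ℝ) ^ k)
    (V : Finset α) (hV : V.card = n) (X : Finset α) (hX : X ⊆ V) (hXc : X.card = x) :
    (Set.ncard {f : Fin m → Finset (Finset α) |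
        (∀ i, f i ∈ matchingsOn k u V) ∧
        c₁ * (x : ℝ) ^ k <
          (((Finset.univ.biUnion f).filter fun S => S ⊆ X).card : ℝ)} : ℝ) /
      (((matchingsOn k u V).card : ℝ) ^ m) ≤
      Real.exp (-(c₁ * (x : ℝ) ^ k)) := by
  subst hV hXc
  have hevent : {f : Fin m → Finset (Finset α) | (∀ i, f i ∈ matchingsOn k u V) ∧
      c₁ * (#X : ℝ) ^ k < #((univ.biUnion f).filter fun S => S ⊆ X)} ⊆
      ↑((Fintype.piFinset fun _ : Fin m => matchingsOn k u V).filter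
        fun f => c₁ * (#X : ℝ) ^ k < ∑ i, (#((f i).filter (· ⊆ X)) : ℝ)) := by
    rintro f ⟨hf, hfs⟩
    refine mem_filter.2 ⟨Fintype.mem_piFinset.2 hf, hfs.trans_le ?_⟩
    rw [filter_biUnion]
    exact_mod_cast card_biUnion_le
  refine div_le_of_le_mul₀ (by positivity) (Real.exp_pos _).le ?_
  calc _ ≤ (#((Fintype.piFinset fun _ : Fin m => matchingsOn k u V).filter
        fun f => c₁ * (#X : ℝ) ^ k < ∑ i, (#((f i).filter (· ⊆ X)) : ℝ)) : ℝ) := by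
        rw [← Set.ncard_coe_finset]
        exact_mod_cast Set.ncard_le_ncard hevent (finite_toSet _)
    _ ≤ Real.exp (-(c₁ * #X ^ k)) * #(matchingsOn k u V) ^ m :=
        card_filter_lt_sum_card_filter_subset_le (by omega) hX hn m
          (by rw [hc₁]; positivity) (mul_exp_two_sub_one_mul_le hc₀' hc₁ hn hmu)

/-- Claim 1: for `m` independent uniformly random `k`-matchings `M₁,…,M_m` of size `u`
with `m·u ≤ c₀·n^k` and `⌈c₁ x^k⌉ ≤ m`, the union `U_m` satisfies
`Pr[|U_m ∩ [X]^k| > c₁ x^k] ≤ exp(−c₁ x^k)`. The probability is expressed as a counting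
ratio over the tuples `(M₁,…,M_m)` of matchings. -/
theorem stmt18 {α : Type*} [DecidableEq α] (k : ℕ) (hk : 2 ≤ k) (c₀ c₁ : ℝ)
    (hc₀ : 0 < c₀) (hc₀' : c₀ ≤ 1 / (8 * Real.exp 1 ^ 2 * (k.factorial : ℝ)))
    (hc₁ : c₁ = 1 / (4 * (k.factorial : ℝ)))
    (n u m x : ℕ) (hn : 0 < n) (hu : 0 < u) (hm : 0 < m) (hx : 0 < x)
    (hku : k * u ≤ n) (hmu : ((m : ℝ) * u) ≤ c₀ * (n : ℝ) ^ k)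
    (htm : Nat.ceil (c₁ * (x : ℝ) ^ k) ≤ m)
    (V : Finset α) (hV : V.card = n) (X : Finset α) (hX : X ⊆ V) (hXc : X.card = x) :
    (Set.ncard {f : Fin m → Finset (Finset α) |
        (∀ i, f i ∈ matchingsOn k u V) ∧
        c₁ * (x : ℝ) ^ k <
          (((Finset.univ.biUnion f).filter fun S => S ⊆ X).card : ℝ)} : ℝ) /
      (((matchingsOn k u V).card : ℝ) ^ m) ≤
      Real.exp (-(c₁ * (x : ℝ) ^ k)) :=
  stmt18_general k hk c₀ c₁ hc₀' hc₁ n u m x hn hmu V hV X hX hXc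
end
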